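/- arXiv:1507.00063 — 12 statements merged into one kernel-verified Lean document; each statement's English description precedes it below -/
import Mathlib

section
/- For all n ≥ 0, the term x_n is a positive integer; moreover the ratio y_n = x_{n+1}/x_n is a positive integer, and z_n = y_{n+1}/y_n = F(x_{n+1}) is a positive integer. -/
lemma aux_eval_pos (F : Polynomial ℤ) (hFnonneg : ∀ i, 0 ≤ F.coeff i)
    (hF0 : F.coeff 0 = 1) (m : ℤ) (hm : 0 < m) : 0 < F.eval m := by
  rw [Polynomial.eval_eq_sum_range]
  apply Finset.sum_pos'
  · intro i _
    exact mul_nonneg (hFnonneg i) (pow_nonneg hm.le i)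
  · exact ⟨0, Finset.mem_range.mpr (Nat.succ_pos _), by simp [hF0]⟩

lemma aux_aeval_cast (F : Polynomial ℤ) (m : ℤ) :
    Polynomial.aeval (m : ℚ) F = ((F.eval m : ℤ) : ℚ) := by
  rw [Polynomial.aeval_def, Polynomial.eval₂_eq_eval_map]
  simp [Polynomial.eval_intCast_map]

/-- For all `n ≥ 0`, the term `x n` is a positive integer; moreover the ratio
`y n = x (n+1) / x n` is a positive integer, and
`z n = y (n+1) / y n = F(x (n+1))` is a positive integer. -/
theorem stmt_0 (F : Polynomial ℤ)
    (hFnonneg : ∀ i, 0 ≤ F.coeff i) (hF0 : F.coeff 0 = 1) (hFdeg : 1 ≤ F.natDegree)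
    (x : ℕ → ℚ) (hxpos : ∀ n, 0 < x n) (hx0 : x 0 = 1) (hx1 : x 1 = 1)
    (hrec : ∀ n, x (n + 2) * x n = (x (n + 1)) ^ 2 * Polynomial.aeval (x (n + 1)) F) :
    ∀ n : ℕ,
      (∃ k : ℤ, 0 < k ∧ x n = (k : ℚ)) ∧
      (∃ k : ℤ, 0 < k ∧ x (n + 1) / x n = (k : ℚ)) ∧
      ((x (n + 2) / x (n + 1)) / (x (n + 1) / x n) = Polynomial.aeval (x (n + 1)) F ∧
        ∃ k : ℤ, 0 < k ∧ Polynomial.aeval (x (n + 1)) F = (k : ℚ)) := by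
  have key : ∀ n : ℕ, ∃ a b : ℤ, 0 < a ∧ 0 < b ∧ x n = (a : ℚ) ∧ x (n + 1) = (b : ℚ) * x n := by
    intro n
    induction n with
    | zero => exact ⟨1, 1, one_pos, one_pos, by simp [hx0], by simp [hx0, hx1]⟩
    | succ n ih =>
      obtain ⟨a, b, ha, hb, hxa, hxb⟩ := ih
      set c : ℤ := F.eval (b * a) with hc
      have hcpos : 0 < c := aux_eval_pos F hFnonneg hF0 _ (mul_pos hb ha)
      have hxn1 : x (n + 1) = ((b * a : ℤ) : ℚ) := by rw [hxb, hxa]; push_cast; ring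
      refine ⟨b * a, b * c, mul_pos hb ha, mul_pos hb hcpos, hxn1, ?_⟩
      have hF : Polynomial.aeval (x (n + 1)) F = ((c : ℤ) : ℚ) := by
        rw [hxn1, aux_aeval_cast]
      have h := hrec n
      have hxn : x n ≠ 0 := (hxpos n).ne'
      have hxn1ne : x (n + 1) ≠ 0 := (hxpos (n + 1)).ne'
      rw [hF, hxn1, hxa] at h
      have ha0 : (a : ℚ) ≠ 0 := Int.cast_ne_zero.mpr ha.ne'
      have h2 : x (n + 2) * (a : ℚ) = ((b * c : ℤ) : ℚ) * ((b * a : ℤ) : ℚ) * (a : ℚ) := by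
        rw [h]; push_cast; ring
      show x (n + 2) = _ * x (n + 1)
      rw [hxn1]
      exact mul_right_cancel₀ ha0 h2
  intro n
  obtain ⟨a, b, ha, hb, hxa, hxb⟩ := key n
  obtain ⟨a', b', ha', hb', hxa', hxb'⟩ := key (n + 1)
  have hxn : x n ≠ 0 := (hxpos n).ne'
  have hxn1 : x (n + 1) ≠ 0 := (hxpos (n + 1)).ne'
  have hxn1v : x (n + 1) = ((b * a : ℤ) : ℚ) := by rw [hxb, hxa]; push_cast; ring
  set c : ℤ := F.eval (b * a) with hc
  have hcpos : 0 < c := aux_eval_pos F hFnonneg hF0 _ (mul_pos hb ha)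
  have hF : Polynomial.aeval (x (n + 1)) F = ((c : ℤ) : ℚ) := by rw [hxn1v, aux_aeval_cast]
  refine ⟨⟨a, ha, hxa⟩, ⟨b, hb, ?_⟩, ?_, c, hcpos, hF⟩
  · rw [hxb]; field_simp
  · have h := hrec n
    field_simp
    linarith [h]
end

section
/- The sequence (x_n) satisfies x_{n+1} > x_n for all n ≥ 1, and the sequences of ratios y_n = x_{n+1}/x_n and z_n = F(x_{n+1}) are strictly increasing for n ≥ 0. -/
lemma aux_eval_lt (F : Polynomial ℤ) (hFnonneg : ∀ i, 0 ≤ F.coeff i)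
    (hFdeg : 1 ≤ F.natDegree) {s t : ℚ} (hs : 0 ≤ s) (hst : s < t) :
    Polynomial.aeval s F < Polynomial.aeval t F := by
  have hFne : F ≠ 0 := by rintro rfl; simp at hFdeg
  set g : Polynomial ℚ := F.map (algebraMap ℤ ℚ) with hg
  have hinj : Function.Injective (algebraMap ℤ ℚ) := fun a b h => by exact_mod_cast h
  have hdeg : g.natDegree = F.natDegree :=
    Polynomial.natDegree_map_eq_of_injective hinj F
  have heval : ∀ u : ℚ, Polynomial.aeval u F = g.eval u := by
    intro u; rw [Polynomial.aeval_def, Polynomial.eval₂_eq_eval_map]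
  rw [heval s, heval t, Polynomial.eval_eq_sum_range, Polynomial.eval_eq_sum_range]
  apply Finset.sum_lt_sum
  · intro i _
    have hc : (0:ℚ) ≤ g.coeff i := by
      rw [hg, Polynomial.coeff_map, algebraMap_int_eq, eq_intCast]
      exact_mod_cast hFnonneg i
    exact mul_le_mul_of_nonneg_left (pow_le_pow_left₀ hs hst.le i) hc
  · refine ⟨g.natDegree, Finset.self_mem_range_succ _, ?_⟩
    have hc : (0:ℚ) < g.coeff g.natDegree := by
      rw [hg, Polynomial.coeff_map, hdeg, algebraMap_int_eq, eq_intCast]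
      have hne : F.coeff F.natDegree ≠ 0 := Polynomial.leadingCoeff_ne_zero.mpr hFne
      exact_mod_cast lt_of_le_of_ne (hFnonneg _) (Ne.symm hne)
    have hd0 : g.natDegree ≠ 0 := by omega
    exact mul_lt_mul_of_pos_left (pow_lt_pow_left₀ hst hs hd0) hc

lemma aux_one_lt (F : Polynomial ℤ) (hFnonneg : ∀ i, 0 ≤ F.coeff i)
    (hF0 : F.coeff 0 = 1) (hFdeg : 1 ≤ F.natDegree) {t : ℚ} (ht : 0 < t) :
    1 < Polynomial.aeval t F := by
  have h := aux_eval_lt F hFnonneg hFdeg le_rfl ht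
  simpa [Polynomial.aeval_def, hF0] using h

/-- the sequence `(x n)` satisfies `x (n+1) > x n` for all `n ≥ 1`, and the
sequences of ratios `y n = x (n+1) / x n` and `z n = F(x (n+1))` are strictly increasing. -/
theorem stmt_1 (F : Polynomial ℤ)
    (hFnonneg : ∀ i, 0 ≤ F.coeff i) (hF0 : F.coeff 0 = 1) (hFdeg : 1 ≤ F.natDegree)
    (x : ℕ → ℚ) (hxpos : ∀ n, 0 < x n) (hx0 : x 0 = 1) (hx1 : x 1 = 1)
    (hrec : ∀ n, x (n + 2) * x n = (x (n + 1)) ^ 2 * Polynomial.aeval (x (n + 1)) F) :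
    (∀ n : ℕ, 1 ≤ n → x n < x (n + 1)) ∧
    StrictMono (fun n : ℕ => x (n + 1) / x n) ∧
    StrictMono (fun n : ℕ => Polynomial.aeval (x (n + 1)) F) := by
  have hratio : ∀ n, x (n + 2) / x (n + 1) = (x (n + 1) / x n) * Polynomial.aeval (x (n + 1)) F := by
    intro n
    have h := hrec n
    have h1 := (hxpos (n+1)).ne'
    have h2 := (hxpos n).ne'
    field_simp
    linear_combination h
  have hy : StrictMono (fun n : ℕ => x (n + 1) / x n) := by
    apply strictMono_nat_of_lt_succ
    intro n
    show x (n + 1) / x n < x (n + 1 + 1) / x (n + 1)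
    rw [show n + 1 + 1 = n + 2 from rfl, hratio n]
    have h1 : 1 < Polynomial.aeval (x (n+1)) F := aux_one_lt F hFnonneg hF0 hFdeg (hxpos _)
    have h2 : 0 < x (n + 1) / x n := div_pos (hxpos _) (hxpos _)
    nlinarith
  have hlt : ∀ n : ℕ, 1 ≤ n → x n < x (n + 1) := by
    intro n hn
    have h := hy (show 0 < n by omega)
    simp only [hx0, hx1] at h
    rw [div_one] at h  -- h : 1 < x (n+1) / x n
    exact (one_lt_div (hxpos n)).mp h
  refine ⟨hlt, hy, ?_⟩
  apply strictMono_nat_of_lt_succ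
  intro n
  exact aux_eval_lt F hFnonneg hFdeg (hxpos _).le (hlt (n+1) (by omega))
end

section
/- For all N ≥ 0, the continued fraction denominators satisfy q_{2N−1} = x_{N+1}/x_N − 1 and q_{2N} = x_{N+1}. -/
/-!
Induction on `N`, two denominators at a time. Write `y = F(x_{N+1})`. The odd partial quotient
`(y - 1) / x_N` times `q_{2N} = x_{N+1}` plus `q_{2N-1} = x_{N+1}/x_N - 1` gives `x_{N+1} y / x_N - 1`,
which is `x_{N+2}/x_{N+1} - 1` by the recurrence; then the even partial quotient `x_{N+1}` gives
`x_{N+1} (x_{N+2}/x_{N+1} - 1) + x_{N+1} = x_{N+2}`.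
-/

section ContinuedFractionDenominators

variable {x y a q : ℕ → ℚ}

theorem denom_even_succ (hx : ∀ n, x n ≠ 0)
    (hrec : ∀ n, x (n + 2) * x n = x (n + 1) ^ 2 * y (n + 1))
    (haodd : ∀ n, a (2 * n + 1) = (y (n + 1) - 1) / x n)
    (hq : ∀ n, q (n + 2) = a (n + 1) * q (n + 1) + q n) {N : ℕ}
    (hqe : q (2 * N) = x (N + 1) / x N - 1) (hqo : q (2 * N + 1) = x (N + 1)) :
    q (2 * (N + 1)) = x (N + 2) / x (N + 1) - 1 := by
  have hxN := hx N
  have hxN1 := hx (N + 1)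
  rw [show 2 * (N + 1) = 2 * N + 2 by ring, hq, haodd, hqe, hqo]
  field_simp
  linear_combination -hrec N

theorem denom_odd_succ (hx : ∀ n, x n ≠ 0)
    (haeven : ∀ n, a (2 * n) = x n)
    (hq : ∀ n, q (n + 2) = a (n + 1) * q (n + 1) + q n) {N : ℕ}
    (hqe : q (2 * (N + 1)) = x (N + 2) / x (N + 1) - 1) (hqo : q (2 * N + 1) = x (N + 1)) :
    q (2 * (N + 1) + 1) = x (N + 2) := by
  have hxN1 := hx (N + 1)
  rw [show 2 * (N + 1) + 1 = 2 * N + 1 + 2 by ring, hq,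
    show 2 * N + 1 + 1 = 2 * (N + 1) by ring, haeven, hqe, hqo]
  field_simp
  ring

end ContinuedFractionDenominators

/-- `q` is indexed with a shift: `q (m+1)` is the denominator `q_m` of the `m`-th convergent,
and `q 0 = q_{-1} = 0`. -/
theorem stmt_3_general (F : Polynomial ℤ)
    (x : ℕ → ℚ) (hxpos : ∀ n, 0 < x n) (hx0 : x 0 = 1) (hx1 : x 1 = 1)
    (hrec : ∀ n, x (n + 2) * x n = (x (n + 1)) ^ 2 * Polynomial.aeval (x (n + 1)) F)
    (a : ℕ → ℚ)
    (haeven : ∀ n, a (2 * n) = x n)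
    (haodd : ∀ n, a (2 * n + 1) = (Polynomial.aeval (x (n + 1)) F - 1) / x n)
    (q : ℕ → ℚ)
    (hq0 : q 0 = 0) (hq1 : q 1 = 1)
    (hq : ∀ n, q (n + 2) = a (n + 1) * q (n + 1) + q n) :
    ∀ N : ℕ, q (2 * N) = x (N + 1) / x N - 1 ∧ q (2 * N + 1) = x (N + 1) := by
  have hx : ∀ n, x n ≠ 0 := fun n => (hxpos n).ne'
  intro N
  induction N with
  | zero => simp [hq0, hq1, hx0, hx1]
  | succ N ih =>
    have hqe := denom_even_succ (y := fun n => Polynomial.aeval (x n) F) hx hrec haodd hq ih.1 ih.2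
    exact ⟨hqe, denom_odd_succ hx haeven hq hqe ih.2⟩

/-- for all `N ≥ 0` the continued fraction denominators satisfy
`q_{2N-1} = x (N+1) / x N - 1` and `q_{2N} = x (N+1)`.  Here `q` is indexed with a shift,
so that `q (m+1)` is the denominator `q_m` of the `m`-th convergent, and `q 0 = q_{-1} = 0`. -/
theorem stmt_3 (F : Polynomial ℤ)
    (hFnonneg : ∀ i, 0 ≤ F.coeff i) (hF0 : F.coeff 0 = 1) (hFdeg : 1 ≤ F.natDegree)
    (x : ℕ → ℚ) (hxpos : ∀ n, 0 < x n) (hx0 : x 0 = 1) (hx1 : x 1 = 1)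
    (hrec : ∀ n, x (n + 2) * x n = (x (n + 1)) ^ 2 * Polynomial.aeval (x (n + 1)) F)
    (a : ℕ → ℚ)
    (haeven : ∀ n, a (2 * n) = x n)
    (haodd : ∀ n, a (2 * n + 1) = (Polynomial.aeval (x (n + 1)) F - 1) / x n)
    (p q : ℕ → ℚ)
    (hp0 : p 0 = 1) (hp1 : p 1 = a 0) (hq0 : q 0 = 0) (hq1 : q 1 = 1)
    (hp : ∀ n, p (n + 2) = a (n + 1) * p (n + 1) + p n)
    (hq : ∀ n, q (n + 2) = a (n + 1) * q (n + 1) + q n) :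
    ∀ N : ℕ, q (2 * N) = x (N + 1) / x N - 1 ∧ q (2 * N + 1) = x (N + 1) :=
  stmt_3_general F x hxpos hx0 hx1 hrec a haeven haodd q hq0 hq1 hq
end

section
/- For every N ≥ 1, the partial sum of reciprocals S_N = Σ_{j=1}^{N} 1/x_j equals the finite continued fraction [a_0; a_1, a_2, …, a_{2N−2}], i.e., S_N = p_{2N−2}/q_{2N−2}. -/
/-!
Consecutive even convergents `p_{2M}/q_{2M}` and `p_{2M+2}/q_{2M+2}` differ by
`a_{2M+2} / (q_{2M} q_{2M+2})`, by the determinant identity for continuants. The recurrence for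
`x` is exactly what makes the denominators `q_{2M} = x_{M+1}`, and `a_{2M+2} = x_{M+1}`, so the
difference is `1 / x_{M+2}` and the even convergents telescope to the partial sums.
-/

section Continuant

variable {R : Type*} [CommRing R] {a p q : ℕ → R}

theorem continuant_det (hp0 : p 0 = 1) (hq0 : q 0 = 0) (hq1 : q 1 = 1)
    (hp : ∀ n, p (n + 2) = a (n + 1) * p (n + 1) + p n)
    (hq : ∀ n, q (n + 2) = a (n + 1) * q (n + 1) + q n) (n : ℕ) :
    p (n + 1) * q n - p n * q (n + 1) = (-1) ^ (n + 1) := by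
  induction n with
  | zero => simp [hp0, hq0, hq1]
  | succ n ih =>
    rw [hp, hq, pow_succ, ← ih]
    ring

theorem continuant_det_two_step (hp0 : p 0 = 1) (hq0 : q 0 = 0) (hq1 : q 1 = 1)
    (hp : ∀ n, p (n + 2) = a (n + 1) * p (n + 1) + p n)
    (hq : ∀ n, q (n + 2) = a (n + 1) * q (n + 1) + q n) (n : ℕ) :
    p (n + 2) * q n - p n * q (n + 2) = (-1) ^ (n + 1) * a (n + 1) := by
  rw [hp, hq, ← continuant_det hp0 hq0 hq1 hp hq n]
  ring

end Continuant

section Convergent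

variable {K : Type*} [Field K] {x a p q : ℕ → K}

/-- The sequence `c` stands for `n ↦ F (x n)`. -/
theorem denominators_eq (c : ℕ → K) (hx : ∀ n, x n ≠ 0) (hx0 : x 0 = 1) (hx1 : x 1 = 1)
    (hrec : ∀ n, x (n + 2) * x n = x (n + 1) ^ 2 * c (n + 1))
    (haeven : ∀ n, a (2 * n) = x n) (haodd : ∀ n, a (2 * n + 1) = (c (n + 1) - 1) / x n)
    (hq0 : q 0 = 0) (hq1 : q 1 = 1) (hq : ∀ n, q (n + 2) = a (n + 1) * q (n + 1) + q n)
    (M : ℕ) : q (2 * M + 1) = x (M + 1) ∧ q (2 * M + 2) = x (M + 2) / x (M + 1) - 1 := by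
  induction M with
  | zero =>
    have hx2 : x 2 = c 1 := by simpa [hx0, hx1] using hrec 0
    refine ⟨by rw [hq1, hx1], ?_⟩
    rw [hq, hq1, hq0, haodd 0, hx0, hx1, hx2]
    ring
  | succ M ih =>
    obtain ⟨hodd, heven⟩ := ih
    have hodd' : q (2 * M + 3) = x (M + 2) := by
      rw [hq, show 2 * M + 1 + 1 = 2 * (M + 1) by ring, haeven, show 2 * (M + 1) = 2 * M + 2 by ring,
        heven, hodd]
      field_simp [hx (M + 1)]
      ring
    refine ⟨hodd', ?_⟩
    have hx3 : x (M + 3) = x (M + 2) ^ 2 * c (M + 2) / x (M + 1) := by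
      rw [eq_div_iff (hx (M + 1))]
      exact hrec (M + 1)
    rw [show 2 * (M + 1) + 2 = 2 * M + 2 + 2 by ring, hq,
      show 2 * M + 2 + 1 = 2 * (M + 1) + 1 by ring, haodd, show 2 * (M + 1) + 1 = 2 * M + 3 by ring,
      hodd', heven, hx3]
    field_simp [hx (M + 1), hx (M + 2)]
    ring

theorem convergent_eq_sum_inv (hx : ∀ n, x n ≠ 0) (haeven : ∀ n, a (2 * n) = x n)
    (hp0 : p 0 = 1) (hq0 : q 0 = 0) (hq1 : q 1 = 1)
    (hp : ∀ n, p (n + 2) = a (n + 1) * p (n + 1) + p n)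
    (hq : ∀ n, q (n + 2) = a (n + 1) * q (n + 1) + q n)
    (hqodd : ∀ M, q (2 * M + 1) = x (M + 1)) (hbase : p 1 / q 1 = 1 / x 1) (M : ℕ) :
    p (2 * M + 1) / q (2 * M + 1) = ∑ j ∈ Finset.Icc 1 (M + 1), 1 / x j := by
  induction M with
  | zero => simpa using hbase
  | succ M ih =>
    have hdet := continuant_det_two_step hp0 hq0 hq1 hp hq (2 * M + 1)
    rw [show 2 * M + 1 + 1 = 2 * (M + 1) by ring, haeven, pow_mul, neg_one_sq, one_pow,
      one_mul, show 2 * M + 1 + 2 = 2 * (M + 1) + 1 by ring, hqodd, hqodd] at hdet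
    rw [Finset.sum_Icc_succ_top (by omega), ← ih, hqodd, hqodd]
    field_simp [hx (M + 1), hx (M + 2)]
    linear_combination hdet

end Convergent

theorem stmt_4_general (F : Polynomial ℤ)
    (x : ℕ → ℚ) (hxpos : ∀ n, 0 < x n) (hx0 : x 0 = 1) (hx1 : x 1 = 1)
    (hrec : ∀ n, x (n + 2) * x n = (x (n + 1)) ^ 2 * Polynomial.aeval (x (n + 1)) F)
    (a : ℕ → ℚ)
    (haeven : ∀ n, a (2 * n) = x n)
    (haodd : ∀ n, a (2 * n + 1) = (Polynomial.aeval (x (n + 1)) F - 1) / x n)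
    (p q : ℕ → ℚ)
    (hp0 : p 0 = 1) (hp1 : p 1 = a 0) (hq0 : q 0 = 0) (hq1 : q 1 = 1)
    (hp : ∀ n, p (n + 2) = a (n + 1) * p (n + 1) + p n)
    (hq : ∀ n, q (n + 2) = a (n + 1) * q (n + 1) + q n) :
    ∀ N : ℕ, 1 ≤ N →
      ∑ j ∈ Finset.Icc 1 N, 1 / x j = p (2 * N - 1) / q (2 * N - 1) := by
  have hx : ∀ n, x n ≠ 0 := fun n => (hxpos n).ne'
  have hqodd M := (denominators_eq (fun n => Polynomial.aeval (x n) F) hx hx0 hx1 hrec haeven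
    haodd hq0 hq1 hq M).1
  have hbase : p 1 / q 1 = 1 / x 1 := by
    rw [hp1, hq1, ← mul_zero 2, haeven, hx0, hx1]
  intro N hN
  obtain ⟨M, rfl⟩ : ∃ M, N = M + 1 := ⟨N - 1, by omega⟩
  rw [show 2 * (M + 1) - 1 = 2 * M + 1 by omega]
  exact (convergent_eq_sum_inv hx haeven hp0 hq0 hq1 hp hq hqodd hbase M).symm

/-- for every `N ≥ 1`, the partial sum `S_N = ∑_{j=1}^N 1 / x j` equals the
finite continued fraction `[a 0; a 1, …, a (2N-2)]`, i.e. `S_N = p_{2N-2} / q_{2N-2}`.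
Here `p`, `q` are indexed with a shift, so that `p (m+1) / q (m+1)` is the `m`-th
convergent, with `p 0 = p_{-1} = 1` and `q 0 = q_{-1} = 0`. -/
theorem stmt_4 (F : Polynomial ℤ)
    (hFnonneg : ∀ i, 0 ≤ F.coeff i) (hF0 : F.coeff 0 = 1) (hFdeg : 1 ≤ F.natDegree)
    (x : ℕ → ℚ) (hxpos : ∀ n, 0 < x n) (hx0 : x 0 = 1) (hx1 : x 1 = 1)
    (hrec : ∀ n, x (n + 2) * x n = (x (n + 1)) ^ 2 * Polynomial.aeval (x (n + 1)) F)
    (a : ℕ → ℚ)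
    (haeven : ∀ n, a (2 * n) = x n)
    (haodd : ∀ n, a (2 * n + 1) = (Polynomial.aeval (x (n + 1)) F - 1) / x n)
    (p q : ℕ → ℚ)
    (hp0 : p 0 = 1) (hp1 : p 1 = a 0) (hq0 : q 0 = 0) (hq1 : q 1 = 1)
    (hp : ∀ n, p (n + 2) = a (n + 1) * p (n + 1) + p n)
    (hq : ∀ n, q (n + 2) = a (n + 1) * q (n + 1) + q n) :
    ∀ N : ℕ, 1 ≤ N →
      ∑ j ∈ Finset.Icc 1 N, 1 / x j = p (2 * N - 1) / q (2 * N - 1) :=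
  stmt_4_general F x hxpos hx0 hx1 hrec a haeven haodd p q hp0 hp1 hq0 hq1 hp hq
end

section
/- The infinite sum S_∞ = Σ_{j=1}^{∞} 1/x_j equals the value of the infinite continued fraction [a_0; a_1, a_2, …], i.e., the sequence of convergents p_m/q_m converges to S_∞ as m → ∞. -/
/-!
With `Sₖ = ∑_{j=1}^{k} 1 / xⱼ`, the convergent `[a₀; …, a₂ₙ]` equals `Sₙ₊₁` and
`[a₀; …, a₂ₙ₊₁]` equals `Sₙ₊₁ + 1 / (xₙ₊₂ - xₙ₊₁)`. Both come from one induction, run on an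
arbitrary solution of the convergent recurrence and then specialised to the numerators and the
denominators. Since `F(t) ≥ 1 + t` for `t ≥ 1`, the recurrence forces `xₙ₊₂ ≥ 2 xₙ₊₁`, so the
series converges geometrically and the correction `1 / (xₙ₊₂ - xₙ₊₁) ≤ 1 / xₙ₊₁` tends to zero.
-/

open Filter Topology Polynomial

theorem Polynomial.one_add_le_aeval {R : Type*} [CommRing R] [LinearOrder R]
    [IsStrictOrderedRing R] {F : ℤ[X]} (hF : ∀ i, 0 ≤ F.coeff i) (hF0 : F.coeff 0 = 1)
    (hd : 1 ≤ F.natDegree) {t : R} (ht : 1 ≤ t) : 1 + t ≤ aeval t F := by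
  have ht0 : 0 ≤ t := zero_le_one.trans ht
  have hlead : (1 : R) ≤ F.coeff F.natDegree := by
    have hne : F.coeff F.natDegree ≠ 0 := leadingCoeff_ne_zero.mpr (by rintro rfl; simp at hd)
    exact_mod_cast (show 1 ≤ F.coeff F.natDegree by have := hF F.natDegree; omega)
  have hsub : ({0, F.natDegree} : Finset ℕ) ⊆ Finset.range (F.natDegree + 1) := by
    intro i hi
    simp only [Finset.mem_insert, Finset.mem_singleton] at hi
    rcases hi with rfl | rfl <;> simp
  rw [aeval_eq_sum_range]
  calc 1 + t ≤ 1 + F.coeff F.natDegree * t ^ F.natDegree := by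
        gcongr
        exact (le_self_pow₀ ht (by omega)).trans (le_mul_of_one_le_left (by positivity) hlead)
    _ = ∑ i ∈ {0, F.natDegree}, F.coeff i • t ^ i := by
        rw [Finset.sum_pair (by omega)]
        simp [hF0, zsmul_eq_mul]
    _ ≤ ∑ i ∈ Finset.range (F.natDegree + 1), F.coeff i • t ^ i :=
        Finset.sum_le_sum_of_subset_of_nonneg hsub fun i _ _ => by
          rw [zsmul_eq_mul]
          exact mul_nonneg (by exact_mod_cast hF i) (pow_nonneg ht0 i)

section Growth

variable {K : Type*} [Field K] [LinearOrder K] [IsStrictOrderedRing K] {x g : ℕ → K}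

theorem one_le_and_le_succ_of_rec (h0 : 1 ≤ x 0) (h01 : x 0 ≤ x 1)
    (hg : ∀ n, 1 ≤ x n → 1 + x n ≤ g n)
    (hrec : ∀ n, x (n + 2) * x n = x (n + 1) ^ 2 * g (n + 1)) (n : ℕ) :
    1 ≤ x n ∧ x n ≤ x (n + 1) := by
  induction n with
  | zero => exact ⟨h0, h01⟩
  | succ n ih =>
    obtain ⟨h1, h2⟩ := ih
    have h1' : 1 ≤ x (n + 1) := h1.trans h2
    have hg' := hg (n + 1) h1'
    refine ⟨h1', le_of_mul_le_mul_right ?_ (zero_lt_one.trans_le h1)⟩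
    nlinarith [hrec n]

theorem two_mul_le_of_rec (h0 : 1 ≤ x 0) (h01 : x 0 ≤ x 1)
    (hg : ∀ n, 1 ≤ x n → 1 + x n ≤ g n)
    (hrec : ∀ n, x (n + 2) * x n = x (n + 1) ^ 2 * g (n + 1)) (n : ℕ) :
    2 * x (n + 1) ≤ x (n + 2) := by
  obtain ⟨h1, h2⟩ := one_le_and_le_succ_of_rec h0 h01 hg hrec n
  have h1' : 1 ≤ x (n + 1) := h1.trans h2
  have hg' := hg (n + 1) h1'
  refine le_of_mul_le_mul_right ?_ (zero_lt_one.trans_le h1)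
  nlinarith [hrec n]

theorem two_pow_le_of_rec (h0 : 1 ≤ x 0) (h01 : x 0 ≤ x 1)
    (hg : ∀ n, 1 ≤ x n → 1 + x n ≤ g n)
    (hrec : ∀ n, x (n + 2) * x n = x (n + 1) ^ 2 * g (n + 1)) (n : ℕ) :
    2 ^ n ≤ x (n + 1) := by
  induction n with
  | zero => simpa using h0.trans h01
  | succ n ih =>
    calc (2 : K) ^ (n + 1) = 2 * 2 ^ n := pow_succ' 2 n
      _ ≤ 2 * x (n + 1) := by gcongr
      _ ≤ x (n + 2) := two_mul_le_of_rec h0 h01 hg hrec n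

end Growth

def recipSum {K : Type*} [Field K] (x : ℕ → K) (n : ℕ) : K :=
  ∑ j ∈ Finset.range n, 1 / x (j + 1)

theorem recipSum_succ {K : Type*} [Field K] (x : ℕ → K) (n : ℕ) :
    recipSum x (n + 1) = recipSum x n + 1 / x (n + 1) :=
  Finset.sum_range_succ _ n

theorem rec_solution_closed_form {K : Type*} [Field K] {x g a r : ℕ → K}
    (hx : ∀ n, x n ≠ 0) (hx0 : x 0 = 1) (hx1 : x 1 = 1)
    (hrec : ∀ n, x (n + 2) * x n = x (n + 1) ^ 2 * g (n + 1))
    (haeven : ∀ n, a (2 * n) = x n) (haodd : ∀ n, a (2 * n + 1) = (g (n + 1) - 1) / x n)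
    (hr : ∀ n, r (n + 2) = a (n + 1) * r (n + 1) + r n) (n : ℕ) :
    r (2 * n + 1) = x (n + 1) * (r 1 - r 0 + r 0 * recipSum x (n + 1)) ∧
      r (2 * n + 2) * x (n + 1) =
        (x (n + 2) - x (n + 1)) * (r 1 - r 0 + r 0 * recipSum x (n + 1)) + r 0 := by
  induction n with
  | zero =>
    have hx2 : x 2 = g 1 := by simpa [hx0, hx1] using hrec 0
    have ha1 : a 1 = g 1 - 1 := by simpa [hx0] using haodd 0
    simp only [recipSum, zero_add, Finset.range_one, Finset.sum_singleton, hx1, hr 0, ha1, hx2]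
    constructor <;> ring
  | succ n ih =>
    obtain ⟨hodd, heven⟩ := ih
    set c := r 1 - r 0 + r 0 * recipSum x (n + 1)
    set c' := r 1 - r 0 + r 0 * recipSum x (n + 2)
    have hc : x (n + 2) * c' = x (n + 2) * c + r 0 := by
      simp only [c, c', recipSum_succ x (n + 1)]
      field_simp [hx (n + 2)]
      ring
    have ha2 : a (2 * n + 2) = x (n + 1) := haeven (n + 1)
    have ha3 : a (2 * n + 3) * x (n + 1) = g (n + 2) - 1 := by
      rw [show 2 * n + 3 = 2 * (n + 1) + 1 by ring, haodd, div_mul_cancel₀ _ (hx (n + 1))]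
    have hr3 : r (2 * n + 3) = a (2 * n + 2) * r (2 * n + 2) + r (2 * n + 1) := hr (2 * n + 1)
    have hr4 : r (2 * n + 4) = a (2 * n + 3) * r (2 * n + 3) + r (2 * n + 2) := hr (2 * n + 2)
    have hrec' : x (n + 3) * x (n + 1) = x (n + 2) ^ 2 * g (n + 2) := hrec (n + 1)
    have hodd' : r (2 * n + 3) = x (n + 2) * c' := by
      linear_combination hr3 + r (2 * n + 2) * ha2 + heven + hodd - hc
    refine ⟨hodd', mul_right_cancel₀ (hx (n + 1)) ?_⟩
    linear_combination x (n + 2) * x (n + 1) * hr4 + a (2 * n + 3) * x (n + 2) * x (n + 1) * hodd'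
      + x (n + 2) ^ 2 * c' * ha3 + x (n + 2) * heven - c' * hrec' + (x (n + 1) - x (n + 2)) * hc

theorem tendsto_of_tendsto_two_mul_of_tendsto_two_mul_add_one {α : Type*} {f : ℕ → α}
    {l : Filter α} (h0 : Tendsto (fun n => f (2 * n)) atTop l)
    (h1 : Tendsto (fun n => f (2 * n + 1)) atTop l) : Tendsto f atTop l := by
  intro s hs
  obtain ⟨N₀, hN₀⟩ := eventually_atTop.1 (h0 hs)
  obtain ⟨N₁, hN₁⟩ := eventually_atTop.1 (h1 hs)
  refine eventually_atTop.2 ⟨2 * (N₀ + N₁) + 1, fun m hm => ?_⟩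
  rcases Nat.even_or_odd' m with ⟨n, rfl | rfl⟩
  · exact hN₀ n (by omega)
  · exact hN₁ n (by omega)

theorem tendsto_convergents_of_rec {x g a p q : ℕ → ℝ} (hx0 : x 0 = 1) (hx1 : x 1 = 1)
    (hg : ∀ n, 1 ≤ x n → 1 + x n ≤ g n)
    (hrec : ∀ n, x (n + 2) * x n = x (n + 1) ^ 2 * g (n + 1))
    (haeven : ∀ n, a (2 * n) = x n) (haodd : ∀ n, a (2 * n + 1) = (g (n + 1) - 1) / x n)
    (hp0 : p 0 = 1) (hp1 : p 1 = a 0) (hq0 : q 0 = 0) (hq1 : q 1 = 1)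
    (hp : ∀ n, p (n + 2) = a (n + 1) * p (n + 1) + p n)
    (hq : ∀ n, q (n + 2) = a (n + 1) * q (n + 1) + q n) :
    Tendsto (fun m => p (m + 1) / q (m + 1)) atTop (𝓝 (∑' j, 1 / x (j + 1))) := by
  have h0 : 1 ≤ x 0 := hx0.ge
  have h01 : x 0 ≤ x 1 := (hx0.trans hx1.symm).le
  have hxpos n : 0 < x n := zero_lt_one.trans_le (one_le_and_le_succ_of_rec h0 h01 hg hrec n).1
  have hxne n : x n ≠ 0 := (hxpos n).ne'
  have hdouble n : 2 * x (n + 1) ≤ x (n + 2) := two_mul_le_of_rec h0 h01 hg hrec n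
  have hsum : Summable fun j => 1 / x (j + 1) := by
    refine Summable.of_nonneg_of_le (fun j => (one_div_pos.2 (hxpos _)).le) (fun j => ?_)
      summable_geometric_two
    rw [one_div_pow]
    exact one_div_le_one_div_of_le (by positivity) (two_pow_le_of_rec h0 h01 hg hrec j)
  have hS : Tendsto (fun n => recipSum x (n + 1)) atTop (𝓝 (∑' j, 1 / x (j + 1))) :=
    hsum.hasSum.tendsto_sum_nat.comp (tendsto_add_atTop_nat 1)
  have hp1' : p 1 = 1 := by rw [hp1, ← hx0]; exact haeven 0
  have hP n := rec_solution_closed_form hxne hx0 hx1 hrec haeven haodd hp n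
  have hQ n := rec_solution_closed_form hxne hx0 hx1 hrec haeven haodd hq n
  simp only [hp0, hp1', hq0, hq1, sub_self, zero_add, one_mul, sub_zero, zero_mul, add_zero,
    mul_one] at hP hQ
  refine tendsto_of_tendsto_two_mul_of_tendsto_two_mul_add_one (hS.congr fun n => ?_) ?_
  · rw [(hP n).1, (hQ n).1, mul_div_cancel_left₀ _ (hxne (n + 1))]
  · have hgap n : 0 < x (n + 2) - x (n + 1) := by
      linarith [hdouble n, hxpos (n + 1)]
    have hD : Tendsto (fun n => 1 / (x (n + 2) - x (n + 1))) atTop (𝓝 0) :=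
      squeeze_zero (fun n => (one_div_pos.2 (hgap n)).le)
        (fun n => one_div_le_one_div_of_le (hxpos _) (by linarith [hdouble n]))
        hsum.tendsto_atTop_zero
    refine ((add_zero (∑' j, 1 / x (j + 1))) ▸ hS.add hD).congr fun n => ?_
    have hq2 : q (2 * n + 2) = (x (n + 2) - x (n + 1)) / x (n + 1) :=
      eq_div_of_mul_eq (hxne _) (hQ n).2
    have hp2 : p (2 * n + 2) = ((x (n + 2) - x (n + 1)) * recipSum x (n + 1) + 1) / x (n + 1) :=
      eq_div_of_mul_eq (hxne _) (hP n).2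
    show _ = p (2 * n + 2) / q (2 * n + 2)
    rw [hp2, hq2, div_div_div_cancel_right₀ (hxne _)]
    field_simp [(hgap n).ne']

theorem stmt_5_general (F : Polynomial ℤ)
    (hFnonneg : ∀ i, 0 ≤ F.coeff i) (hF0 : F.coeff 0 = 1) (hFdeg : 1 ≤ F.natDegree)
    (x : ℕ → ℚ) (hx0 : x 0 = 1) (hx1 : x 1 = 1)
    (hrec : ∀ n, x (n + 2) * x n = (x (n + 1)) ^ 2 * Polynomial.aeval (x (n + 1)) F)
    (a : ℕ → ℚ)
    (haeven : ∀ n, a (2 * n) = x n)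
    (haodd : ∀ n, a (2 * n + 1) = (Polynomial.aeval (x (n + 1)) F - 1) / x n)
    (p q : ℕ → ℚ)
    (hp0 : p 0 = 1) (hp1 : p 1 = a 0) (hq0 : q 0 = 0) (hq1 : q 1 = 1)
    (hp : ∀ n, p (n + 2) = a (n + 1) * p (n + 1) + p n)
    (hq : ∀ n, q (n + 2) = a (n + 1) * q (n + 1) + q n) :
    Tendsto (fun m : ℕ => ((p (m + 1) : ℝ) / (q (m + 1) : ℝ)))
      atTop (nhds (∑' j : ℕ, (1 : ℝ) / (x (j + 1) : ℝ))) := by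
  have hg n (hn : 1 ≤ (x n : ℝ)) : 1 + (x n : ℝ) ≤ (aeval (x n) F : ℝ) := by
    exact_mod_cast one_add_le_aeval hFnonneg hF0 hFdeg (by exact_mod_cast hn)
  exact_mod_cast tendsto_convergents_of_rec (x := fun n => (x n : ℝ))
    (a := fun n => (a n : ℝ)) (p := fun n => (p n : ℝ)) (q := fun n => (q n : ℝ))
    (by exact_mod_cast hx0) (by exact_mod_cast hx1) hg (fun n => by exact_mod_cast hrec n)
    (fun n => by exact_mod_cast haeven n) (fun n => by exact_mod_cast haodd n)
    (by exact_mod_cast hp0) (by exact_mod_cast hp1) (by exact_mod_cast hq0)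
    (by exact_mod_cast hq1) (fun n => by exact_mod_cast hp n) (fun n => by exact_mod_cast hq n)

/-- the infinite sum `S_∞ = ∑_{j=1}^∞ 1 / x j` equals the value of the
infinite continued fraction `[a 0; a 1, a 2, …]`, i.e. the sequence of convergents
`p_m / q_m` converges to `S_∞` as `m → ∞`.  Here `p`, `q` are indexed with a shift, so that
`p (m+1) / q (m+1)` is the `m`-th convergent, with `p 0 = p_{-1} = 1` and `q 0 = q_{-1} = 0`. -/
theorem stmt_5 (F : Polynomial ℤ)
    (hFnonneg : ∀ i, 0 ≤ F.coeff i) (hF0 : F.coeff 0 = 1) (hFdeg : 1 ≤ F.natDegree)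
    (x : ℕ → ℚ) (hxpos : ∀ n, 0 < x n) (hx0 : x 0 = 1) (hx1 : x 1 = 1)
    (hrec : ∀ n, x (n + 2) * x n = (x (n + 1)) ^ 2 * Polynomial.aeval (x (n + 1)) F)
    (a : ℕ → ℚ)
    (haeven : ∀ n, a (2 * n) = x n)
    (haodd : ∀ n, a (2 * n + 1) = (Polynomial.aeval (x (n + 1)) F - 1) / x n)
    (p q : ℕ → ℚ)
    (hp0 : p 0 = 1) (hp1 : p 1 = a 0) (hq0 : q 0 = 0) (hq1 : q 1 = 1)
    (hp : ∀ n, p (n + 2) = a (n + 1) * p (n + 1) + p n)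
    (hq : ∀ n, q (n + 2) = a (n + 1) * q (n + 1) + q n) :
    Tendsto (fun m : ℕ => ((p (m + 1) : ℝ) / (q (m + 1) : ℝ)))
      atTop (nhds (∑' j : ℕ, (1 : ℝ) / (x (j + 1) : ℝ))) :=
  stmt_5_general F hFnonneg hF0 hFdeg x hx0 hx1 hrec a haeven haodd p q hp0 hp1 hq0 hq1 hp hq
end

section
/- The series Σ_{j=1}^{∞} 1/x_j of reciprocals of the terms of the sequence (x_n) converges. -/
lemma aux_F_ge_two (F : Polynomial ℤ)
    (hFnonneg : ∀ i, 0 ≤ F.coeff i) (hF0 : F.coeff 0 = 1) (hFdeg : 1 ≤ F.natDegree)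
    (q : ℚ) (hq : 1 ≤ q) : 2 ≤ Polynomial.aeval q F := by
  have hq0 : (0:ℚ) < q := lt_of_lt_of_le one_pos hq
  have hne : F ≠ 0 := fun h => by simp [h] at hFdeg
  have hlead : 1 ≤ F.coeff F.natDegree := by
    have h1 := Polynomial.leadingCoeff_ne_zero.mpr hne
    rw [Polynomial.leadingCoeff] at h1
    have h2 := hFnonneg F.natDegree
    omega
  rw [Polynomial.aeval_eq_sum_range]
  have hsub : ({0, F.natDegree} : Finset ℕ) ⊆ Finset.range (F.natDegree + 1) := by
    intro i hi
    simp only [Finset.mem_insert, Finset.mem_singleton] at hi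
    rcases hi with h | h <;> simp [h] <;> omega
  have hqd : (1:ℚ) ≤ q ^ F.natDegree := one_le_pow₀ hq
  have hcd : (1:ℚ) ≤ (F.coeff F.natDegree : ℚ) := by exact_mod_cast hlead
  calc (2:ℚ) ≤ ∑ i ∈ ({0, F.natDegree} : Finset ℕ), F.coeff i • q ^ i := by
        rw [Finset.sum_pair (by omega)]
        simp only [zsmul_eq_mul, pow_zero, hF0]
        push_cast
        nlinarith
    _ ≤ ∑ i ∈ Finset.range (F.natDegree + 1), F.coeff i • q ^ i := by
        apply Finset.sum_le_sum_of_subset_of_nonneg hsub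
        intro i _ _
        simp only [zsmul_eq_mul]
        have h1 : (0:ℚ) ≤ (F.coeff i : ℚ) := by exact_mod_cast hFnonneg i
        positivity

/-- the series `∑_{j=1}^∞ 1 / x j` of reciprocals of the terms of the
sequence `(x n)` converges. -/
theorem stmt_6 (F : Polynomial ℤ)
    (hFnonneg : ∀ i, 0 ≤ F.coeff i) (hF0 : F.coeff 0 = 1) (hFdeg : 1 ≤ F.natDegree)
    (x : ℕ → ℚ) (hxpos : ∀ n, 0 < x n) (hx0 : x 0 = 1) (hx1 : x 1 = 1)
    (hrec : ∀ n, x (n + 2) * x n = (x (n + 1)) ^ 2 * Polynomial.aeval (x (n + 1)) F) :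
    Summable (fun j : ℕ => (1 : ℝ) / (x (j + 1) : ℝ)) := by
  -- monotonicity and ≥ 1
  have hmono : ∀ n, 1 ≤ x n ∧ x n ≤ x (n + 1) := by
    intro n
    induction n with
    | zero => constructor <;> simp [hx0, hx1]
    | succ n ih =>
      obtain ⟨h1, h2⟩ := ih
      have h1' : 1 ≤ x (n + 1) := le_trans h1 h2
      have hF := aux_F_ge_two F hFnonneg hF0 hFdeg (x (n + 1)) h1'
      refine ⟨h1', ?_⟩
      have hr := hrec n
      have hxn := hxpos n
      nlinarith [hxpos (n + 1)]
  -- doubling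
  have hdouble : ∀ n, 2 * x (n + 1) ≤ x (n + 2) := by
    intro n
    obtain ⟨h1, h2⟩ := hmono n
    have h1' : 1 ≤ x (n + 1) := le_trans h1 h2
    have hF := aux_F_ge_two F hFnonneg hF0 hFdeg (x (n + 1)) h1'
    have hr := hrec n
    have hxn := hxpos n
    nlinarith [hxpos (n + 1)]
  -- growth
  have hgrow : ∀ n, (2:ℚ) ^ n ≤ x (n + 1) := by
    intro n
    induction n with
    | zero => simp [hx1]
    | succ n ih =>
      calc (2:ℚ) ^ (n + 1) = 2 * 2 ^ n := by ring
        _ ≤ 2 * x (n + 1) := by linarith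
        _ ≤ x (n + 2) := hdouble n
  apply Summable.of_nonneg_of_le (f := fun j : ℕ => (1/2 : ℝ) ^ j)
  · intro j
    have := hxpos (j + 1)
    positivity
  · intro j
    have hx : (2:ℝ) ^ j ≤ (x (j + 1) : ℝ) := by exact_mod_cast hgrow j
    have h2 : (0:ℝ) < 2 ^ j := by positivity
    rw [div_pow, one_pow]
    exact one_div_le_one_div_of_le h2 hx
  · exact summable_geometric_two
end

section
/- For the sequence (x_n) generated with F(X) = X + 1 and the continued fraction coefficients a_{2n} = x_n, a_{2n+1} = x_{n+1}/x_n (so a_0 = x_0 = 1), the coefficients satisfy a_{2n} = a_{2n−1}·a_{2n−2} and a_{2n+1} = a_{2n−1}·(a_{2n} + 1) for all n ≥ 1. -/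
/-- for the sequence `(x n)` generated with `F(X) = X + 1` and the continued
fraction coefficients `a (2n) = x n`, `a (2n+1) = x (n+1) / x n` (so `a 0 = x 0 = 1`), the
coefficients satisfy `a (2n) = a (2n-1) * a (2n-2)` and `a (2n+1) = a (2n-1) * (a (2n) + 1)`
for all `n ≥ 1`.  (The divisions `x (n+1) / x n` are exact, which is expressed by
`a (2n+1) * x n = x (n+1)`.) -/
theorem stmt_9 (x : ℕ → ℤ) (hxpos : ∀ n, 0 < x n) (hx0 : x 0 = 1) (hx1 : x 1 = 1)
    (hrec : ∀ n, x (n + 2) * x n = (x (n + 1)) ^ 2 * (x (n + 1) + 1))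
    (a : ℕ → ℤ)
    (haeven : ∀ n, a (2 * n) = x n)
    (haodd : ∀ n, a (2 * n + 1) * x n = x (n + 1)) :
    ∀ n : ℕ, 1 ≤ n →
      a (2 * n) = a (2 * n - 1) * a (2 * n - 2) ∧
      a (2 * n + 1) = a (2 * n - 1) * (a (2 * n) + 1) := by
  rintro n hn
  obtain ⟨m, rfl⟩ : ∃ m, n = m + 1 := ⟨n - 1, (Nat.succ_pred_eq_of_pos hn).symm⟩
  have h1 : 2 * (m + 1) - 1 = 2 * m + 1 := by omega
  have h2 : 2 * (m + 1) - 2 = 2 * m := by omega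
  rw [h1, h2, haeven, haeven]
  have hodd1 := haodd m
  have hodd2 := haodd (m + 1)
  have hr := hrec m
  constructor
  · exact hodd1.symm
  · have hne1 : x (m + 1) ≠ 0 := (hxpos (m + 1)).ne'
    have hne2 : x m ≠ 0 := (hxpos m).ne'
    have key : a (2 * (m + 1) + 1) * (x (m + 1) * x m) =
        a (2 * m + 1) * (x (m + 1) + 1) * (x (m + 1) * x m) := by
      have : a (2 * (m + 1) + 1) * x (m + 1) * x m = x (m + 2) * x m := by
        rw [hodd2]
      rw [hr] at this
      linear_combination this - (x (m + 1) + 1) * x (m + 1) * hodd1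
    have := mul_right_cancel₀ (mul_ne_zero hne1 hne2) key
    linarith [this]
end

section
/- For every n ≥ 1, the terms of the sequence satisfy x_{n+1} > x_n^{d+1}. -/
/-!
Because `F` has nonnegative coefficients, constant term `1` and degree `d ≥ 1`, we have
`F q > q ^ d` for `q ≥ 0`, so the recurrence gives `x (n+2) * x n > x (n+1) ^ (d+2)`.
Inductively `1 ≤ x n` and `x n ^ (d+1) < x (n+1)`; in particular `x n ≤ x (n+1)`, and dividing
the previous inequality by `x n` yields `x (n+1) ^ (d+1) < x (n+2)`.
-/

open Polynomial

namespace Polynomial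

theorem pow_natDegree_lt_eval {R : Type*} [Semiring R] [LinearOrder R] [IsStrictOrderedRing R]
    {p : R[X]} (hcoeff : ∀ i, 0 ≤ p.coeff i) (h0 : 0 < p.coeff 0) (hlead : 1 ≤ p.leadingCoeff)
    (hdeg : p.natDegree ≠ 0) {q : R} (hq : 0 ≤ q) : q ^ p.natDegree < p.eval q := by
  have hpair : ({0, p.natDegree} : Finset ℕ) ⊆ Finset.range (p.natDegree + 1) := by
    simp [Finset.insert_subset_iff]
  calc q ^ p.natDegree
      ≤ p.leadingCoeff * q ^ p.natDegree := le_mul_of_one_le_left (pow_nonneg hq _) hlead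
    _ < p.coeff 0 * q ^ 0 + p.coeff p.natDegree * q ^ p.natDegree := by
        simpa using h0
    _ = ∑ i ∈ {0, p.natDegree}, p.coeff i * q ^ i := by rw [Finset.sum_pair hdeg.symm]
    _ ≤ ∑ i ∈ Finset.range (p.natDegree + 1), p.coeff i * q ^ i :=
        Finset.sum_le_sum_of_subset_of_nonneg hpair
          fun i _ _ => mul_nonneg (hcoeff i) (pow_nonneg hq i)
    _ = p.eval q := (eval_eq_sum_range q).symm

theorem pow_natDegree_lt_aeval_of_int {K : Type*} [Ring K] [LinearOrder K] [IsStrictOrderedRing K]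
    {F : ℤ[X]} (hcoeff : ∀ i, 0 ≤ F.coeff i) (h0 : 0 < F.coeff 0) (hdeg : F.natDegree ≠ 0)
    {q : K} (hq : 0 ≤ q) : q ^ F.natDegree < aeval q F := by
  have hinj : Function.Injective (algebraMap ℤ K) := Int.cast_injective
  have hF : F ≠ 0 := fun h => hdeg (by simp [h])
  have hlead : 1 ≤ F.leadingCoeff := (hcoeff _).lt_of_ne (leadingCoeff_ne_zero.mpr hF).symm
  rw [aeval_def, ← eval_map, ← natDegree_map_eq_of_injective hinj]
  refine pow_natDegree_lt_eval (fun i => ?_) ?_ ?_ ?_ hq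
  · simpa using hcoeff i
  · simpa using h0
  · rw [leadingCoeff_map_of_injective hinj, eq_intCast]
    exact_mod_cast hlead
  · rwa [natDegree_map_eq_of_injective hinj]

end Polynomial

theorem pow_succ_lt_of_pow_succ_lt {R : Type*} [Semiring R] [LinearOrder R] [IsStrictOrderedRing R]
    {a b c : R} {d : ℕ} (ha : 1 ≤ a) (hab : a ^ (d + 1) < b) (hc : b ^ (d + 2) < c * a) :
    b ^ (d + 1) < c := by
  have hab' : a ≤ b := (le_self_pow₀ ha d.succ_ne_zero).trans hab.le
  have hb : 0 ≤ b ^ (d + 1) := pow_nonneg (zero_le_one.trans (ha.trans hab')) _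
  refine lt_of_mul_lt_mul_right ?_ (zero_le_one.trans ha)
  calc b ^ (d + 1) * a ≤ b ^ (d + 1) * b := mul_le_mul_of_nonneg_left hab' hb
    _ = b ^ (d + 2) := (pow_succ b (d + 1)).symm
    _ < c * a := hc

theorem stmt_10_general (F : Polynomial ℤ)
    (hFnonneg : ∀ i, 0 ≤ F.coeff i) (hF0 : F.coeff 0 = 1) (hFdeg : 1 ≤ F.natDegree)
    (x : ℕ → ℚ) (hx0 : x 0 = 1) (hx1 : x 1 = 1)
    (hrec : ∀ n, x (n + 2) * x n = (x (n + 1)) ^ 2 * Polynomial.aeval (x (n + 1)) F) :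
    ∀ n : ℕ, 1 ≤ n → x n ^ (F.natDegree + 1) < x (n + 1) := by
  have hstep : ∀ n, 0 < x (n + 1) → x (n + 1) ^ (F.natDegree + 2) < x (n + 2) * x n := by
    intro n hn
    rw [hrec, pow_add, mul_comm]
    exact mul_lt_mul_of_pos_left
      (pow_natDegree_lt_aeval_of_int hFnonneg (by omega) (by omega) hn.le) (pow_pos hn 2)
  suffices key : ∀ n, 1 ≤ n → 1 ≤ x n ∧ x n ^ (F.natDegree + 1) < x (n + 1) from
    fun n hn => (key n hn).2
  intro n hn
  induction n, hn using Nat.le_induction with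
  | base => simpa [hx0, hx1] using hstep 0 (by simp [hx1])
  | succ n _ ih =>
    have hx : 1 ≤ x (n + 1) := (one_le_pow₀ ih.1).trans ih.2.le
    exact ⟨hx, pow_succ_lt_of_pow_succ_lt ih.1 ih.2 (hstep n (zero_lt_one.trans_le hx))⟩

/-- for every `n ≥ 1`, the terms of the sequence satisfy
`x (n+1) > x n ^ (d+1)`, where `d = deg F`. -/
theorem stmt_10 (F : Polynomial ℤ)
    (hFnonneg : ∀ i, 0 ≤ F.coeff i) (hF0 : F.coeff 0 = 1) (hFdeg : 1 ≤ F.natDegree)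
    (x : ℕ → ℚ) (hxpos : ∀ n, 0 < x n) (hx0 : x 0 = 1) (hx1 : x 1 = 1)
    (hrec : ∀ n, x (n + 2) * x n = (x (n + 1)) ^ 2 * Polynomial.aeval (x (n + 1)) F) :
    ∀ n : ℕ, 1 ≤ n → x n ^ (F.natDegree + 1) < x (n + 1) :=
  stmt_10_general F hFnonneg hF0 hFdeg x hx0 hx1 hrec
end

section
/- For every n ≥ 2, the terms of the sequence satisfy x_{n+1} > x_n^{d+2−1/(d+1)}; in particular, since d ≥ 1, x_{n+1} > x_n^{5/2} for all n ≥ 2. -/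
/-- for every `n ≥ 2`, the terms of the sequence satisfy
`x (n+1) > x n ^ (d + 2 - 1/(d+1))`; in particular, since `d ≥ 1`,
`x (n+1) > x n ^ (5/2)` for all `n ≥ 2`. -/
theorem stmt_11 (F : Polynomial ℤ)
    (hFnonneg : ∀ i, 0 ≤ F.coeff i) (hF0 : F.coeff 0 = 1) (hFdeg : 1 ≤ F.natDegree)
    (x : ℕ → ℚ) (hxpos : ∀ n, 0 < x n) (hx0 : x 0 = 1) (hx1 : x 1 = 1)
    (hrec : ∀ n, x (n + 2) * x n = (x (n + 1)) ^ 2 * Polynomial.aeval (x (n + 1)) F) :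
    ∀ n : ℕ, 2 ≤ n →
      (x n : ℝ) ^ ((F.natDegree : ℝ) + 2 - 1 / ((F.natDegree : ℝ) + 1)) < (x (n + 1) : ℝ) ∧
      (x n : ℝ) ^ ((5 : ℝ) / 2) < (x (n + 1) : ℝ) := by
  set d := F.natDegree with hd
  set dR : ℝ := (d : ℝ) with hdRdef
  have hdR : (1:ℝ) ≤ dR := by rw [hdRdef]; exact_mod_cast hFdeg
  set α : ℝ := dR + 2 - 1 / (dR + 1) with hα
  have hdR1 : (0:ℝ) < dR + 1 := by linarith
  have hα_ge : dR + 1 ≤ α := by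
    have h1 : 1 / (dR + 1) ≤ 1 := by rw [div_le_one hdR1]; linarith
    rw [hα]; linarith
  have hα_pos : (0:ℝ) < α := by linarith
  have hα52 : (5:ℝ)/2 ≤ α := by
    have h2 : 1/(dR+1) ≤ 1/2 := by
      apply one_div_le_one_div_of_le <;> linarith
    rw [hα]; linarith
  have hα_lt : α < dR + 2 := by
    have : (0:ℝ) < 1/(dR+1) := by positivity
    rw [hα]; linarith
  have hkey : α ≤ dR + 2 - 1/α := by
    have h1 : 1/α ≤ 1/(dR+1) := one_div_le_one_div_of_le hdR1 hα_ge
    rw [hα]; linarith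
  -- lower bound for F
  have hFne : F ≠ 0 := by
    intro h; rw [h] at hF0; simp at hF0
  have hld : (1:ℤ) ≤ F.coeff d := by
    have h := Polynomial.leadingCoeff_ne_zero.mpr hFne
    rw [Polynomial.leadingCoeff] at h
    have h2 : F.coeff d ≠ 0 := by rw [hd]; exact h
    have := hFnonneg d
    omega
  have hFge : ∀ t : ℚ, 0 < t → t ^ d + 1 ≤ Polynomial.aeval t F := by
    intro t ht
    rw [Polynomial.aeval_def, Polynomial.eval₂_eq_eval_map]
    set P := F.map (algebraMap ℤ ℚ) with hP
    have hPd : P.natDegree = d := by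
      rw [hP]; exact Polynomial.natDegree_map_eq_of_injective
        (RingHom.injective_int (algebraMap ℤ ℚ)) F
    rw [Polynomial.eval_eq_sum_range, hPd]
    have hsub : ({0, d} : Finset ℕ) ⊆ Finset.range (d + 1) := by
      intro i hi; simp at hi; rcases hi with h | h <;> simp [h] <;> omega
    have hnn : ∀ i ∈ Finset.range (d+1), i ∉ ({0, d} : Finset ℕ) → 0 ≤ P.coeff i * t ^ i := by
      intro i _ _
      apply mul_nonneg _ (pow_nonneg ht.le i)
      rw [hP, Polynomial.coeff_map]
      have := hFnonneg i
      simp only [algebraMap_int_eq, eq_intCast]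
      exact_mod_cast this
    have hle := Finset.sum_le_sum_of_subset_of_nonneg hsub hnn
    have h0d : (0:ℕ) ≠ d := by omega
    rw [Finset.sum_pair h0d] at hle
    have hc0 : P.coeff 0 = 1 := by
      rw [hP, Polynomial.coeff_map, hF0]; simp
    have hcd : (1:ℚ) ≤ P.coeff d := by
      rw [hP, Polynomial.coeff_map]
      simp only [algebraMap_int_eq, eq_intCast]
      exact_mod_cast hld
    have htd : (0:ℚ) < t ^ d := pow_pos ht d
    calc t ^ d + 1 ≤ P.coeff d * t ^ d + 1 := by nlinarith
      _ = P.coeff 0 * t ^ 0 + P.coeff d * t ^ d := by rw [hc0]; ring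
      _ ≤ _ := hle
  -- recurrence in ℚ: x(n+2)*x n > x(n+1)^(d+2)
  have hrecQ : ∀ n, x (n+1) ^ (d+2) < x (n+2) * x n := by
    intro n
    have h := hrec n
    have hF := hFge (x (n+1)) (hxpos (n+1))
    have hp2 : (0:ℚ) < x (n+1) ^ 2 := pow_pos (hxpos (n+1)) 2
    have he : x (n+1) ^ (d+2) = x (n+1) ^ d * x (n+1) ^ 2 := by rw [pow_add]
    nlinarith [pow_pos (hxpos (n+1)) d]
  -- main induction
  have main : ∀ n, 2 ≤ n → 1 < (x n : ℝ) ∧ (x n : ℝ) ^ α < (x (n+1) : ℝ) := by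
    intro n hn
    induction n with
    | zero => omega
    | succ m ih =>
      rcases Nat.lt_or_ge m 2 with hm | hm
      · -- base case: m+1 = 2, i.e. m = 1
        have hm1 : m = 1 := by omega
        subst hm1
        have hx2 : (2:ℚ) ≤ x 2 := by
          have h := hrec 0
          rw [hx0, hx1] at h
          have hF := hFge 1 one_pos
          simp at h hF
          linarith
        have hx2R : (2:ℝ) ≤ (x 2 : ℝ) := by exact_mod_cast hx2
        have h1 : (1:ℝ) < (x 2 : ℝ) := by linarith
        refine ⟨h1, ?_⟩
        have hQ := hrecQ 1
        rw [hx1, mul_one] at hQ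
        have hR : ((x 2 : ℝ)) ^ (d+2) < (x 3 : ℝ) := by exact_mod_cast hQ
        have heq : (x 2 : ℝ) ^ (dR + 2) = (x 2 : ℝ) ^ (d+2) := by
          rw [← Real.rpow_natCast (x 2 : ℝ) (d+2)]
          norm_num [hdRdef]
        calc (x 2 : ℝ) ^ α < (x 2 : ℝ) ^ (dR + 2) :=
              (Real.rpow_lt_rpow_left_iff h1).mpr hα_lt
          _ = (x 2 : ℝ) ^ (d+2) := heq
          _ < (x 3 : ℝ) := hR
      · obtain ⟨ha1, h2m⟩ := ih hm
        set a : ℝ := (x m : ℝ) with hadef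
        set b : ℝ := (x (m+1) : ℝ) with hbdef
        set c : ℝ := (x (m+2) : ℝ) with hcdef
        have ha0 : (0:ℝ) < a := by rw [hadef]; exact_mod_cast hxpos m
        have hb0 : (0:ℝ) < b := by rw [hbdef]; exact_mod_cast hxpos (m+1)
        have hb1 : (1:ℝ) < b := by
          have : (1:ℝ) < a ^ α := Real.one_lt_rpow_iff_of_pos ha0 |>.mpr (Or.inl ⟨ha1, hα_pos⟩)
          linarith
        refine ⟨hb1, ?_⟩
        have hQ := hrecQ m
        have hR : b ^ (d+2) < c * a := by rw [hadef, hbdef, hcdef]; exact_mod_cast hQ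
        have heq : b ^ (dR + 2) = b ^ (d+2) := by
          rw [← Real.rpow_natCast b (d+2)]
          norm_num [hdRdef]
        have hR' : b ^ (dR + 2) < c * a := by rw [heq]; exact hR
        have ha_lt : a < b ^ (1/α) := by
          have h := Real.rpow_lt_rpow (Real.rpow_nonneg ha0.le α) h2m (by positivity : (0:ℝ) < 1/α)
          rwa [← Real.rpow_mul ha0.le, mul_one_div_cancel (ne_of_gt hα_pos), Real.rpow_one] at h
        have hdiv : b ^ (dR + 2) / a < c := (div_lt_iff₀ ha0).mpr hR'
        have h3 : b ^ (dR + 2) / b ^ (1/α) < b ^ (dR + 2) / a :=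
          div_lt_div_of_pos_left (Real.rpow_pos_of_pos hb0 _) ha0 ha_lt
        have h4 : b ^ α ≤ b ^ (dR + 2 - 1/α) :=
          (Real.rpow_le_rpow_left_iff hb1).mpr hkey
        have h5 : b ^ (dR + 2 - 1/α) = b ^ (dR + 2) / b ^ (1/α) := Real.rpow_sub hb0 _ _
        calc b ^ α ≤ b ^ (dR + 2 - 1/α) := h4
          _ = b ^ (dR + 2) / b ^ (1/α) := h5
          _ < b ^ (dR + 2) / a := h3
          _ < c := hdiv
  intro n hn
  obtain ⟨h1, h2⟩ := main n hn
  refine ⟨h2, ?_⟩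
  calc (x n : ℝ) ^ ((5:ℝ)/2) ≤ (x n : ℝ) ^ α := (Real.rpow_le_rpow_left_iff h1).mpr hα52
    _ < (x (n+1) : ℝ) := h2
end

section
/- For every n ≥ 2 and every j ≥ 1, the terms of the sequence satisfy x_{n+j} > x_n^{(5/2)^j}. -/
open Polynomial

lemma aux_aeval_ge_one (F : Polynomial ℤ)
    (hFnonneg : ∀ i, 0 ≤ F.coeff i) (hF0 : F.coeff 0 = 1) (q : ℚ) (hq : 0 ≤ q) :
    1 ≤ Polynomial.aeval q F := by
  have h := Polynomial.aeval_eq_sum_range (R := ℤ) (S := ℚ) (p := F)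
  rw [h]
  have h0 : (0 : ℕ) ∈ Finset.range (F.natDegree + 1) := by simp
  calc (1 : ℚ) = F.coeff 0 • q ^ 0 := by simp [hF0]
    _ ≤ _ := Finset.single_le_sum (f := fun i => F.coeff i • q ^ i)
        (fun i _ => by
          have := hFnonneg i
          simp only [zsmul_eq_mul]
          positivity) h0

lemma aux_aeval_ge (F : Polynomial ℤ)
    (hFnonneg : ∀ i, 0 ≤ F.coeff i) (hF0 : F.coeff 0 = 1) (hFdeg : 1 ≤ F.natDegree)
    (q : ℚ) (hq : 1 ≤ q) :
    1 + q ≤ Polynomial.aeval q F := by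
  have hq0 : (0:ℚ) ≤ q := by linarith
  have h := Polynomial.aeval_eq_sum_range (R := ℤ) (S := ℚ) (p := F)
  rw [h]
  have hne : F ≠ 0 := by
    intro h; rw [h] at hFdeg; simp at hFdeg
  have hlead : 1 ≤ F.coeff F.natDegree := by
    have h1 := Polynomial.leadingCoeff_ne_zero.mpr hne
    rw [Polynomial.leadingCoeff] at h1
    have h2 := hFnonneg F.natDegree
    omega
  have hsub : ({0, F.natDegree} : Finset ℕ) ⊆ Finset.range (F.natDegree + 1) := by
    intro i hi
    simp at hi
    rcases hi with h | h <;> simp [h]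
  have hpair : ∑ i ∈ ({0, F.natDegree} : Finset ℕ), F.coeff i • q ^ i
      = F.coeff 0 • q ^ 0 + F.coeff F.natDegree • q ^ F.natDegree := by
    apply Finset.sum_pair
    omega
  calc 1 + q ≤ F.coeff 0 • q ^ 0 + F.coeff F.natDegree • q ^ F.natDegree := by
        simp only [zsmul_eq_mul, pow_zero, mul_one, hF0, Polynomial.coeff_natDegree]
        have hp : q ≤ q ^ F.natDegree := le_self_pow₀ hq (by omega)
        have hc : (1:ℚ) ≤ (F.leadingCoeff : ℚ) := by
          rw [Polynomial.leadingCoeff]; exact_mod_cast hlead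
        push_cast
        nlinarith
    _ = ∑ i ∈ ({0, F.natDegree} : Finset ℕ), F.coeff i • q ^ i := hpair.symm
    _ ≤ _ := Finset.sum_le_sum_of_subset_of_nonneg hsub (fun i _ _ => by
        have := hFnonneg i
        simp only [zsmul_eq_mul]
        positivity)
/-- for every `n ≥ 2` and every `j ≥ 1`, the terms of the sequence satisfy
`x (n+j) > x n ^ ((5/2)^j)`. -/
theorem stmt_12 (F : Polynomial ℤ)
    (hFnonneg : ∀ i, 0 ≤ F.coeff i) (hF0 : F.coeff 0 = 1) (hFdeg : 1 ≤ F.natDegree)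
    (x : ℕ → ℚ) (hxpos : ∀ n, 0 < x n) (hx0 : x 0 = 1) (hx1 : x 1 = 1)
    (hrec : ∀ n, x (n + 2) * x n = (x (n + 1)) ^ 2 * Polynomial.aeval (x (n + 1)) F) :
    ∀ n : ℕ, 2 ≤ n → ∀ j : ℕ, 1 ≤ j →
      (x n : ℝ) ^ (((5 : ℝ) / 2) ^ j) < (x (n + j) : ℝ) := by
  -- the sequence is ≥ 1 and nondecreasing
  have key : ∀ n, 1 ≤ x n ∧ x n ≤ x (n + 1) := by
    intro n
    induction n with
    | zero => exact ⟨by rw [hx0], by rw [hx0, hx1]⟩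
    | succ n ih =>
      obtain ⟨h1, h2⟩ := ih
      have h1' : 1 ≤ x (n + 1) := h1.trans h2
      refine ⟨h1', ?_⟩
      have hF := aux_aeval_ge_one F hFnonneg hF0 (x (n + 1)) (by linarith)
      have hr := hrec n
      have hp := hxpos n
      have hp1 := hxpos (n + 1)
      nlinarith [sq_nonneg (x (n + 1)), mul_pos hp1 hp1]
  have hmono : Monotone x := monotone_nat_of_le_succ (fun n => (key n).2)
  -- x 2 ≥ 2
  have hx2 : 2 ≤ x 2 := by
    have hr := hrec 0
    rw [hx0, hx1] at hr
    have hF := aux_aeval_ge F hFnonneg hF0 hFdeg 1 le_rfl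
    nlinarith
  have hge2 : ∀ n, 2 ≤ n → 2 ≤ x n := fun n hn => hx2.trans (hmono hn)
  -- key step: x (n+1) > x n ^ (5/2) for n ≥ 2
  have hstep : ∀ n, 2 ≤ n → (x n : ℝ) ^ ((5 : ℝ) / 2) < (x (n + 1) : ℝ) := by
    intro n hn
    induction n, hn using Nat.le_induction with
    | base =>
      have hr := hrec 1
      rw [hx1] at hr
      have hF := aux_aeval_ge F hFnonneg hF0 hFdeg (x 2) (by linarith)
      have hq : x 2 ^ 3 < x 3 := by nlinarith
      have ha : (2 : ℝ) ≤ (x 2 : ℝ) := by exact_mod_cast hx2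
      have ha1 : (1 : ℝ) ≤ (x 2 : ℝ) := by linarith
      calc (x 2 : ℝ) ^ ((5 : ℝ) / 2) ≤ (x 2 : ℝ) ^ ((3 : ℕ) : ℝ) :=
            Real.rpow_le_rpow_of_exponent_le ha1 (by norm_num)
        _ = (x 2 : ℝ) ^ (3 : ℕ) := Real.rpow_natCast _ 3
        _ < (x 3 : ℝ) := by exact_mod_cast hq
    | succ n hn ih =>
      set a : ℝ := (x n : ℝ) with hadef
      set b : ℝ := (x (n + 1) : ℝ) with hbdef
      set c : ℝ := (x (n + 2) : ℝ) with hcdef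
      have ha2 : (2 : ℝ) ≤ a := by rw [hadef]; exact_mod_cast hge2 n hn
      have ha0 : (0 : ℝ) < a := by linarith
      have hab : a ≤ b := by rw [hadef, hbdef]; exact_mod_cast hmono (Nat.le_succ n)
      have hb1 : (1 : ℝ) < b := by linarith
      have hb0 : (0 : ℝ) < b := by linarith
      -- a < b ^ (2/5)
      have halt : a < b ^ ((2 : ℝ) / 5) := by
        have h1 : (a ^ ((5 : ℝ) / 2)) ^ ((2 : ℝ) / 5) < b ^ ((2 : ℝ) / 5) :=
          Real.rpow_lt_rpow (Real.rpow_nonneg ha0.le _) ih (by norm_num)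
        rwa [← Real.rpow_mul ha0.le, show (5 : ℝ) / 2 * (2 / 5) = 1 by norm_num,
          Real.rpow_one] at h1
      -- c * a ≥ b ^ 3
      have hF : 1 + x (n + 1) ≤ Polynomial.aeval (x (n + 1)) F :=
        aux_aeval_ge F hFnonneg hF0 hFdeg _ (by rw [hbdef] at hb1; exact_mod_cast hb1.le)
      have hr := hrec n
      have hq : x (n + 1) ^ 3 ≤ x (n + 2) * x n := by nlinarith [hxpos (n + 1)]
      have hca : b ^ (3 : ℕ) ≤ c * a := by rw [hadef, hbdef, hcdef]; exact_mod_cast hq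
      -- conclude c > b ^ (13/5)
      have hmain : b ^ ((13 : ℝ) / 5) < c := by
        have h2 : b ^ ((13 : ℝ) / 5) * a < c * a := by
          calc b ^ ((13 : ℝ) / 5) * a < b ^ ((13 : ℝ) / 5) * b ^ ((2 : ℝ) / 5) := by
                have := Real.rpow_pos_of_pos hb0 ((13 : ℝ) / 5)
                nlinarith
            _ = b ^ ((13 : ℝ) / 5 + (2 : ℝ) / 5) := (Real.rpow_add hb0 _ _).symm
            _ = b ^ ((3 : ℕ) : ℝ) := by norm_num
            _ = b ^ (3 : ℕ) := Real.rpow_natCast _ 3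
            _ ≤ c * a := hca
        exact lt_of_mul_lt_mul_right h2 ha0.le
      calc b ^ ((5 : ℝ) / 2) ≤ b ^ ((13 : ℝ) / 5) :=
            Real.rpow_le_rpow_of_exponent_le hb1.le (by norm_num)
        _ < c := hmain
  -- final induction on j
  intro n hn j hj
  induction j, hj using Nat.le_induction with
  | base => simpa using hstep n hn
  | succ j hj ih =>
    have hnj : 2 ≤ n + j := by omega
    have h1 : (x (n + j) : ℝ) ^ ((5 : ℝ) / 2) < (x (n + j + 1) : ℝ) := hstep _ hnj
    have h2 : ((x n : ℝ) ^ (((5 : ℝ) / 2) ^ j)) ^ ((5 : ℝ) / 2)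
        < (x (n + j) : ℝ) ^ ((5 : ℝ) / 2) :=
      Real.rpow_lt_rpow (Real.rpow_nonneg (by exact_mod_cast (hxpos n).le) _) ih (by norm_num)
    have h3 : ((x n : ℝ) ^ (((5 : ℝ) / 2) ^ j)) ^ ((5 : ℝ) / 2)
        = (x n : ℝ) ^ (((5 : ℝ) / 2) ^ (j + 1)) := by
      rw [← Real.rpow_mul (by exact_mod_cast (hxpos n).le : (0:ℝ) ≤ (x n : ℝ)), ← pow_succ]
    rw [show n + (j + 1) = n + j + 1 from rfl]
    calc (x n : ℝ) ^ (((5 : ℝ) / 2) ^ (j + 1))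
        < (x (n + j) : ℝ) ^ ((5 : ℝ) / 2) := by rw [← h3]; exact h2
      _ < _ := h1
end

section
/- For every n ≥ 1, the difference between S_∞ = Σ_{j=1}^∞ 1/x_j and the even-indexed convergent p_{2n}/q_{2n} is the tail of the series: S_∞ − p_{2n}/q_{2n} = Σ_{j=n+2}^∞ 1/x_j; moreover, for every ε with 0 < ε < 1/2 there exists N such that for all n ≥ N one has 0 < S_∞ − p_{2n}/q_{2n} < 1/q_{2n}^{5/2−ε}. -/
/-!
Since `F` has nonnegative coefficients, `F(0) = 1` and degree at least one, `F(t) ≥ 1 + t` for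
`t ≥ 1`, and the recurrence gives `x_{n+2} ≥ x_{n+1} (1 + x_{n+1})`: the `x_n` at least double,
`x_n² ≤ x_{n+1}`, and `x_{n+1}³ ≤ x_{n+2} x_n`. Running the recurrences for `p` and `q` two steps
at a time gives `q_{2n} = x_{n+1}` and `p_{2n} = x_{n+1} ∑_{j=1}^{n+1} 1/x_j`, so
`S_∞ - p_{2n}/q_{2n}` is the tail of the series, which the doubling bounds by `2/x_{n+2}`.
Finally `x_{n+2} ≥ x_{n+1}³/x_n ≥ x_{n+1}^{5/2} = q_{2n}^{5/2}` because `x_n ≤ x_{n+1}^{1/2}`,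
and the factor `2` is absorbed by `q_{2n}^ε → ∞`.
-/

open Polynomial Finset Filter

theorem one_add_le_aeval_of_coeff_nonneg {R : Type*} [CommRing R] [LinearOrder R]
    [IsStrictOrderedRing R] {F : ℤ[X]} (hF : ∀ i, 0 ≤ F.coeff i) (hF0 : F.coeff 0 = 1)
    (hdeg : 1 ≤ F.natDegree) {t : R} (ht : 1 ≤ t) : 1 + t ≤ aeval t F := by
  have hterm : ∀ i ∈ range (F.natDegree + 1), 0 ≤ F.coeff i • t ^ i :=
    fun i _ => zsmul_nonneg (pow_nonneg (zero_le_one.trans ht) i) (hF i)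
  have hlead : (1 : R) ≤ F.coeff F.natDegree := by
    have : F.coeff F.natDegree ≠ 0 := leadingCoeff_ne_zero.2 fun h => by simp [h] at hF0
    exact_mod_cast (hF _).lt_of_ne' this
  calc 1 + t ≤ F.coeff 0 • t ^ 0 + F.coeff F.natDegree • t ^ F.natDegree := by
        rw [hF0, one_smul, pow_zero, zsmul_eq_mul]
        gcongr
        calc t ≤ t ^ F.natDegree := le_self_pow₀ ht (by omega)
          _ ≤ _ := le_mul_of_one_le_left (by positivity) hlead
    _ ≤ ∑ i ∈ range (F.natDegree + 1), F.coeff i • t ^ i :=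
        add_le_sum hterm (by simp) (by simp) (by omega)
    _ = aeval t F := (aeval_eq_sum_range t).symm

structure IsRecSeq {R : Type*} [Monoid R] (g : R → R) (x : ℕ → R) : Prop where
  zero : x 0 = 1
  one : x 1 = 1
  step : ∀ n, x (n + 2) * x n = x (n + 1) ^ 2 * g (x (n + 1))

theorem pow_mul_le_of_two_mul_le {R : Type*} [Semiring R] [PartialOrder R] [IsOrderedRing R]
    {y : ℕ → R} (h : ∀ n, 2 * y n ≤ y (n + 1)) (k : ℕ) : 2 ^ k * y 0 ≤ y k := by
  induction k with
  | zero => simp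
  | succ k ih =>
    calc 2 ^ (k + 1) * y 0 = 2 * (2 ^ k * y 0) := by rw [pow_succ', mul_assoc]
      _ ≤ 2 * y k := by gcongr; exact zero_le_two
      _ ≤ y (k + 1) := h k

namespace IsRecSeq

section Growth

variable {R : Type*} [CommRing R] [LinearOrder R] [IsStrictOrderedRing R] {g : R → R}
  {x : ℕ → R}

theorem one_le_and_le_succ (hx : IsRecSeq g x) (hg : ∀ t, 1 ≤ t → 1 + t ≤ g t) (n : ℕ) :
    1 ≤ x n ∧ x n ≤ x (n + 1) := by
  induction n with
  | zero => simp [hx.zero, hx.one]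
  | succ n ih =>
    obtain ⟨hn, hle⟩ := ih
    have hn1 := hn.trans hle
    refine ⟨hn1, le_of_mul_le_mul_right ?_ (zero_lt_one.trans_le hn)⟩
    have hgn := hg _ hn1
    calc x (n + 1) * x n ≤ x (n + 1) ^ 2 * (1 + x (n + 1)) := by nlinarith
      _ ≤ x (n + 2) * x n := by rw [hx.step]; gcongr

theorem one_le (hx : IsRecSeq g x) (hg : ∀ t, 1 ≤ t → 1 + t ≤ g t) (n : ℕ) : 1 ≤ x n :=
  (hx.one_le_and_le_succ hg n).1

theorem pos (hx : IsRecSeq g x) (hg : ∀ t, 1 ≤ t → 1 + t ≤ g t) (n : ℕ) : 0 < x n :=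
  zero_lt_one.trans_le (hx.one_le hg n)

theorem pow_three_le_mul (hx : IsRecSeq g x) (hg : ∀ t, 1 ≤ t → 1 + t ≤ g t) (n : ℕ) :
    x (n + 1) ^ 3 ≤ x (n + 2) * x n := by
  have := hg _ (hx.one_le hg (n + 1))
  rw [hx.step, pow_succ]
  gcongr
  linarith

theorem mul_one_add_le (hx : IsRecSeq g x) (hg : ∀ t, 1 ≤ t → 1 + t ≤ g t) (n : ℕ) :
    x (n + 1) * (1 + x (n + 1)) ≤ x (n + 2) := by
  refine le_of_mul_le_mul_right ?_ (hx.pos hg n)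
  have hle := (hx.one_le_and_le_succ hg n).2
  calc x (n + 1) * (1 + x (n + 1)) * x n ≤ x (n + 1) ^ 2 * (1 + x (n + 1)) := by
        have := hx.pos hg (n + 1)
        rw [sq]; nlinarith
    _ ≤ x (n + 2) * x n := by rw [hx.step]; gcongr; exact hg _ (hx.one_le hg (n + 1))

theorem two_mul_le (hx : IsRecSeq g x) (hg : ∀ t, 1 ≤ t → 1 + t ≤ g t) (n : ℕ) :
    2 * x (n + 1) ≤ x (n + 2) := by
  nlinarith [hx.mul_one_add_le hg n, hx.one_le hg (n + 1)]

theorem sq_le_succ (hx : IsRecSeq g x) (hg : ∀ t, 1 ≤ t → 1 + t ≤ g t) (n : ℕ) :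
    x n ^ 2 ≤ x (n + 1) := by
  cases n with
  | zero => simp [hx.zero, hx.one]
  | succ n => nlinarith [hx.mul_one_add_le hg n, hx.pos hg (n + 1)]

theorem two_pow_le (hx : IsRecSeq g x) (hg : ∀ t, 1 ≤ t → 1 + t ≤ g t) (n : ℕ) :
    2 ^ n ≤ x (n + 1) := by
  simpa [hx.one] using pow_mul_le_of_two_mul_le (y := fun n => x (n + 1)) (hx.two_mul_le hg) n

end Growth

section Convergents

variable {K : Type*} [Field K] {g : K → K} {x a : ℕ → K}

theorem denominators (hx : IsRecSeq g x) (hne : ∀ n, x n ≠ 0)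
    (ha_even : ∀ n, a (2 * n) = x n) (ha_odd : ∀ n, a (2 * n + 1) = (g (x (n + 1)) - 1) / x n)
    {q : ℕ → K} (hq0 : q 0 = 0) (hq1 : q 1 = 1)
    (hq : ∀ n, q (n + 2) = a (n + 1) * q (n + 1) + q n)
    (n : ℕ) : q (2 * n + 1) = x (n + 1) ∧ q (2 * n + 2) = x (n + 2) / x (n + 1) - 1 := by
  induction n with
  | zero =>
    have h2 := hx.step 0
    rw [hx.zero, hx.one] at h2
    refine ⟨by rw [hq1, hx.one], ?_⟩
    rw [hq 0, hq0, hq1, ha_odd 0, hx.zero, hx.one]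
    simp only [zero_add, mul_one, one_pow, one_mul, div_one] at h2 ⊢
    rw [h2, add_zero]
  | succ n ih =>
    have ha : a (2 * n + 2) = x (n + 1) := ha_even (n + 1)
    have hodd : q (2 * n + 3) = x (n + 2) := by
      rw [hq (2 * n + 1), ha, ih.1, ih.2]
      field_simp [hne]
      ring
    refine ⟨hodd, ?_⟩
    have hb : a (2 * n + 3) = (g (x (n + 2)) - 1) / x (n + 1) := ha_odd (n + 1)
    have hq4 : q (2 * n + 4) = a (2 * n + 3) * q (2 * n + 3) + q (2 * n + 2) := hq (2 * n + 2)
    show q (2 * n + 4) = x (n + 3) / x (n + 2) - 1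
    rw [hq4, hb, hodd, ih.2]
    field_simp [hne]
    linear_combination -hx.step (n + 1)

theorem numerators (hx : IsRecSeq g x) (hne : ∀ n, x n ≠ 0)
    (ha_even : ∀ n, a (2 * n) = x n) (ha_odd : ∀ n, a (2 * n + 1) = (g (x (n + 1)) - 1) / x n)
    {p : ℕ → K} (hp0 : p 0 = 1) (hp1 : p 1 = a 0)
    (hp : ∀ n, p (n + 2) = a (n + 1) * p (n + 1) + p n)
    (n : ℕ) :
    p (2 * n + 1) = x (n + 1) * ∑ j ∈ range (n + 1), 1 / x (j + 1) ∧
      p (2 * n + 2) = x (n + 2) / x (n + 1) * ∑ j ∈ range (n + 2), 1 / x (j + 1) -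
        ∑ j ∈ range (n + 1), 1 / x (j + 1) := by
  induction n with
  | zero =>
    have h2 := hx.step 0
    rw [hx.zero, hx.one] at h2
    refine ⟨by simp [hp1, ha_even 0, hx.zero, hx.one], ?_⟩
    rw [hp 0, hp0, hp1, ha_odd 0, ha_even 0]
    simp only [sum_range_succ, sum_range_zero, hx.zero, hx.one]
    field_simp [hne]
    linear_combination -h2
  | succ n ih =>
    set S := ∑ j ∈ range (n + 1), 1 / x (j + 1)
    have hS2 : ∑ j ∈ range (n + 2), 1 / x (j + 1) = S + 1 / x (n + 2) := sum_range_succ _ _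
    have hS3 : ∑ j ∈ range (n + 3), 1 / x (j + 1) = S + 1 / x (n + 2) + 1 / x (n + 3) := by
      rw [sum_range_succ, hS2]
    rw [hS2] at ih ⊢
    rw [hS3]
    have ha : a (2 * n + 2) = x (n + 1) := ha_even (n + 1)
    have hodd : p (2 * n + 3) = x (n + 2) * (S + 1 / x (n + 2)) := by
      rw [hp (2 * n + 1), ha, ih.1, ih.2]
      field_simp [hne]
      ring
    refine ⟨hodd, ?_⟩
    have hb : a (2 * n + 3) = (g (x (n + 2)) - 1) / x (n + 1) := ha_odd (n + 1)
    have hp4 : p (2 * n + 4) = a (2 * n + 3) * p (2 * n + 3) + p (2 * n + 2) := hp (2 * n + 2)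
    show p (2 * n + 4) = x (n + 3) / x (n + 2) * (S + 1 / x (n + 2) + 1 / x (n + 3)) -
      (S + 1 / x (n + 2))
    rw [hp4, hb, hodd, ih.2]
    field_simp [hne]
    linear_combination (-(S * x (n + 2) + 1)) * hx.step (n + 1)

theorem convergent_odd_eq (hx : IsRecSeq g x) (hne : ∀ n, x n ≠ 0)
    (ha_even : ∀ n, a (2 * n) = x n) (ha_odd : ∀ n, a (2 * n + 1) = (g (x (n + 1)) - 1) / x n)
    {p q : ℕ → K} (hp0 : p 0 = 1) (hp1 : p 1 = a 0) (hq0 : q 0 = 0) (hq1 : q 1 = 1)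
    (hp : ∀ n, p (n + 2) = a (n + 1) * p (n + 1) + p n)
    (hq : ∀ n, q (n + 2) = a (n + 1) * q (n + 1) + q n) (n : ℕ) :
    p (2 * n + 1) / q (2 * n + 1) = ∑ j ∈ range (n + 1), 1 / x (j + 1) := by
  rw [(hx.numerators hne ha_even ha_odd hp0 hp1 hp n).1,
    (hx.denominators hne ha_even ha_odd hq0 hq1 hq n).1, mul_div_cancel_left₀ _ (hne _)]

end Convergents

end IsRecSeq

section Estimates

variable {y : ℕ → ℝ}

theorem pos_of_two_mul_le (h0 : 0 < y 0) (h : ∀ n, 2 * y n ≤ y (n + 1)) (n : ℕ) : 0 < y n :=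
  (by positivity : (0 : ℝ) < 2 ^ n * y 0).trans_le (pow_mul_le_of_two_mul_le h n)

theorem one_div_le_of_two_mul_le (h0 : 0 < y 0) (h : ∀ n, 2 * y n ≤ y (n + 1)) (n : ℕ) :
    1 / y n ≤ 1 / y 0 * (1 / 2) ^ n :=
  calc 1 / y n ≤ 1 / (2 ^ n * y 0) :=
        one_div_le_one_div_of_le (by positivity) (pow_mul_le_of_two_mul_le h n)
    _ = 1 / y 0 * (1 / 2) ^ n := by rw [one_div_pow, one_div_mul_one_div, mul_comm]

theorem summable_one_div_of_two_mul_le (h0 : 0 < y 0) (h : ∀ n, 2 * y n ≤ y (n + 1)) :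
    Summable fun n => 1 / y n :=
  (summable_geometric_two.mul_left _).of_nonneg_of_le
    (fun n => one_div_nonneg.2 (pos_of_two_mul_le h0 h n).le)
    (one_div_le_of_two_mul_le h0 h)

theorem tsum_one_div_le_of_two_mul_le (h0 : 0 < y 0) (h : ∀ n, 2 * y n ≤ y (n + 1)) :
    ∑' n, 1 / y n ≤ 2 / y 0 :=
  calc ∑' n, 1 / y n ≤ ∑' n, 1 / y 0 * (1 / 2) ^ n :=
        (summable_one_div_of_two_mul_le h0 h).tsum_le_tsum (one_div_le_of_two_mul_le h0 h)
          (summable_geometric_two.mul_left _)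
    _ = 2 / y 0 := by rw [tsum_mul_left, tsum_geometric_two, one_div_mul_eq_div]

theorem rpow_five_halves_le {a b c : ℝ} (hb : 0 < b) (hc : 0 ≤ c) (hab : a ^ 2 ≤ b)
    (hbc : b ^ 3 ≤ c * a) : b ^ (5 / 2 : ℝ) ≤ c := by
  have hsqrt : 0 < √b := Real.sqrt_pos.2 hb
  refine le_of_mul_le_mul_right ?_ hsqrt
  calc b ^ (5 / 2 : ℝ) * √b = b ^ 3 := by
        rw [Real.sqrt_eq_rpow, ← Real.rpow_add hb, ← Real.rpow_natCast]
        norm_num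
    _ ≤ c * a := hbc
    _ ≤ c * √b := mul_le_mul_of_nonneg_left (Real.le_sqrt_of_sq_le hab) hc

theorem two_div_lt_one_div_rpow_sub {b c s ε : ℝ} (hb : 0 < b) (hc : b ^ s ≤ c)
    (hε : 2 < b ^ ε) : 2 / c < 1 / b ^ (s - ε) := by
  have hbs : 0 < b ^ s := Real.rpow_pos_of_pos hb s
  calc 2 / c ≤ 2 / b ^ s := div_le_div_of_nonneg_left zero_le_two hbs hc
    _ < b ^ ε / b ^ s := div_lt_div_of_pos_right hε hbs
    _ = 1 / b ^ (s - ε) := by rw [Real.rpow_sub hb, one_div_div]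

end Estimates

namespace IsRecSeq

variable {g : ℝ → ℝ} {x : ℕ → ℝ}

theorem summable_one_div (hx : IsRecSeq g x) (hg : ∀ t, 1 ≤ t → 1 + t ≤ g t) :
    Summable fun j => 1 / x (j + 1) :=
  summable_one_div_of_two_mul_le (hx.pos hg 1) (hx.two_mul_le hg)

theorem two_mul_le_tail (hx : IsRecSeq g x) (hg : ∀ t, 1 ≤ t → 1 + t ≤ g t) (n j : ℕ) :
    2 * x (j + n + 2) ≤ x (j + 1 + n + 2) := by
  rw [add_right_comm j 1 n]
  exact hx.two_mul_le hg (j + n + 1)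

theorem tsum_tail_pos (hx : IsRecSeq g x) (hg : ∀ t, 1 ≤ t → 1 + t ≤ g t) (n : ℕ) :
    0 < ∑' j, 1 / x (j + n + 2) :=
  (summable_one_div_of_two_mul_le (y := fun j => x (j + n + 2)) (hx.pos hg _)
    (hx.two_mul_le_tail hg n)).tsum_pos (fun _ => (one_div_pos.2 (hx.pos hg _)).le) 0
      (one_div_pos.2 (hx.pos hg _))

theorem eventually_tsum_tail_lt (hx : IsRecSeq g x) (hg : ∀ t, 1 ≤ t → 1 + t ≤ g t) {ε : ℝ}
    (hε : 0 < ε) :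
    ∀ᶠ n in atTop, ∑' j, 1 / x (j + n + 2) < 1 / x (n + 1) ^ ((5 : ℝ) / 2 - ε) := by
  have hlim : Tendsto (fun n => x (n + 1) ^ ε) atTop atTop :=
    (tendsto_rpow_atTop hε).comp <| tendsto_atTop_mono (hx.two_pow_le hg)
      (tendsto_pow_atTop_atTop_of_one_lt one_lt_two)
  filter_upwards [hlim.eventually_gt_atTop 2] with n hn
  calc ∑' j, 1 / x (j + n + 2) ≤ 2 / x (n + 2) := by
        simpa using tsum_one_div_le_of_two_mul_le (y := fun j => x (j + n + 2)) (hx.pos hg _)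
          (hx.two_mul_le_tail hg n)
    _ < 1 / x (n + 1) ^ ((5 : ℝ) / 2 - ε) :=
        two_div_lt_one_div_rpow_sub (hx.pos hg _)
          (rpow_five_halves_le (hx.pos hg _) (hx.pos hg _).le (hx.sq_le_succ hg n)
            (hx.pow_three_le_mul hg n)) hn

end IsRecSeq

theorem stmt_13_general (F : Polynomial ℤ)
    (hFnonneg : ∀ i, 0 ≤ F.coeff i) (hF0 : F.coeff 0 = 1) (hFdeg : 1 ≤ F.natDegree)
    (x : ℕ → ℚ) (hx0 : x 0 = 1) (hx1 : x 1 = 1)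
    (hrec : ∀ n, x (n + 2) * x n = (x (n + 1)) ^ 2 * Polynomial.aeval (x (n + 1)) F)
    (a : ℕ → ℚ)
    (haeven : ∀ n, a (2 * n) = x n)
    (haodd : ∀ n, a (2 * n + 1) = (Polynomial.aeval (x (n + 1)) F - 1) / x n)
    (p q : ℕ → ℚ)
    (hp0 : p 0 = 1) (hp1 : p 1 = a 0) (hq0 : q 0 = 0) (hq1 : q 1 = 1)
    (hp : ∀ n, p (n + 2) = a (n + 1) * p (n + 1) + p n)
    (hq : ∀ n, q (n + 2) = a (n + 1) * q (n + 1) + q n) :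
    (∀ n : ℕ, 1 ≤ n →
      (∑' j : ℕ, (1 : ℝ) / (x (j + 1) : ℝ)) - (p (2 * n + 1) : ℝ) / (q (2 * n + 1) : ℝ)
        = ∑' j : ℕ, (1 : ℝ) / (x (j + n + 2) : ℝ)) ∧
    (∀ ε : ℝ, 0 < ε → ε < 1 / 2 → ∃ N : ℕ, ∀ n : ℕ, N ≤ n →
      0 < (∑' j : ℕ, (1 : ℝ) / (x (j + 1) : ℝ)) - (p (2 * n + 1) : ℝ) / (q (2 * n + 1) : ℝ) ∧
      (∑' j : ℕ, (1 : ℝ) / (x (j + 1) : ℝ)) - (p (2 * n + 1) : ℝ) / (q (2 * n + 1) : ℝ)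
        < 1 / (q (2 * n + 1) : ℝ) ^ ((5 : ℝ) / 2 - ε)) := by
  have hgQ (t : ℚ) : 1 ≤ t → 1 + t ≤ aeval t F :=
    one_add_le_aeval_of_coeff_nonneg hFnonneg hF0 hFdeg
  have hgR (t : ℝ) : 1 ≤ t → 1 + t ≤ aeval t F :=
    one_add_le_aeval_of_coeff_nonneg hFnonneg hF0 hFdeg
  have hxQ : IsRecSeq (fun t : ℚ => aeval t F) x := ⟨hx0, hx1, hrec⟩
  have hxR : IsRecSeq (fun t : ℝ => aeval t F) (fun n => (x n : ℝ)) :=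
    ⟨by simp [hx0], by simp [hx1], fun n => by
      have hcast : aeval (x (n + 1) : ℝ) F = (aeval (x (n + 1)) F : ℚ) := by
        simpa using aeval_algebraMap_apply ℝ (x (n + 1)) F
      rw [hcast]
      exact_mod_cast hrec n⟩
  have hne (n : ℕ) : x n ≠ 0 := (hxQ.pos hgQ n).ne'
  have hconv (n : ℕ) :
      (p (2 * n + 1) : ℝ) / q (2 * n + 1) = ∑ j ∈ range (n + 1), 1 / (x (j + 1) : ℝ) := by
    exact_mod_cast congrArg ((↑) : ℚ → ℝ)
      (hxQ.convergent_odd_eq hne haeven haodd hp0 hp1 hq0 hq1 hp hq n)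
  have htail (n : ℕ) : (∑' j, 1 / (x (j + 1) : ℝ)) - p (2 * n + 1) / q (2 * n + 1) =
      ∑' j, 1 / (x (j + n + 2) : ℝ) := by
    rw [hconv, ← (hxR.summable_one_div hgR).sum_add_tsum_nat_add (n + 1), add_sub_cancel_left]
    rfl
  refine ⟨fun n _ => htail n, fun ε hε _ => ?_⟩
  obtain ⟨N, hN⟩ := eventually_atTop.1 (hxR.eventually_tsum_tail_lt hgR hε)
  refine ⟨N, fun n hn => ?_⟩
  rw [htail n, (hxQ.denominators hne haeven haodd hq0 hq1 hq n).1]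
  exact ⟨hxR.tsum_tail_pos hgR n, hN n hn⟩

/-- for every `n ≥ 1`, the difference between `S_∞ = ∑_{j=1}^∞ 1 / x j` and
the even-indexed convergent `p_{2n} / q_{2n}` is the tail of the series:
`S_∞ - p_{2n} / q_{2n} = ∑_{j=n+2}^∞ 1 / x j`; moreover, for every `ε` with `0 < ε < 1/2`
there exists `N` such that for all `n ≥ N` one has
`0 < S_∞ - p_{2n} / q_{2n} < 1 / q_{2n} ^ (5/2 - ε)`.  Here `p`, `q` are indexed with a
shift, so that `p (m+1) / q (m+1)` is the `m`-th convergent, with `p 0 = p_{-1} = 1` and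
`q 0 = q_{-1} = 0`. -/
theorem stmt_13 (F : Polynomial ℤ)
    (hFnonneg : ∀ i, 0 ≤ F.coeff i) (hF0 : F.coeff 0 = 1) (hFdeg : 1 ≤ F.natDegree)
    (x : ℕ → ℚ) (hxpos : ∀ n, 0 < x n) (hx0 : x 0 = 1) (hx1 : x 1 = 1)
    (hrec : ∀ n, x (n + 2) * x n = (x (n + 1)) ^ 2 * Polynomial.aeval (x (n + 1)) F)
    (a : ℕ → ℚ)
    (haeven : ∀ n, a (2 * n) = x n)
    (haodd : ∀ n, a (2 * n + 1) = (Polynomial.aeval (x (n + 1)) F - 1) / x n)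
    (p q : ℕ → ℚ)
    (hp0 : p 0 = 1) (hp1 : p 1 = a 0) (hq0 : q 0 = 0) (hq1 : q 1 = 1)
    (hp : ∀ n, p (n + 2) = a (n + 1) * p (n + 1) + p n)
    (hq : ∀ n, q (n + 2) = a (n + 1) * q (n + 1) + q n) :
    (∀ n : ℕ, 1 ≤ n →
      (∑' j : ℕ, (1 : ℝ) / (x (j + 1) : ℝ)) - (p (2 * n + 1) : ℝ) / (q (2 * n + 1) : ℝ)
        = ∑' j : ℕ, (1 : ℝ) / (x (j + n + 2) : ℝ)) ∧
    (∀ ε : ℝ, 0 < ε → ε < 1 / 2 → ∃ N : ℕ, ∀ n : ℕ, N ≤ n →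
      0 < (∑' j : ℕ, (1 : ℝ) / (x (j + 1) : ℝ)) - (p (2 * n + 1) : ℝ) / (q (2 * n + 1) : ℝ) ∧
      (∑' j : ℕ, (1 : ℝ) / (x (j + 1) : ℝ)) - (p (2 * n + 1) : ℝ) / (q (2 * n + 1) : ℝ)
        < 1 / (q (2 * n + 1) : ℝ) ^ ((5 : ℝ) / 2 - ε)) :=
  stmt_13_general F hFnonneg hF0 hFdeg x hx0 hx1 hrec a haeven haodd p q hp0 hp1 hq0 hq1 hp hq
end

section
/- The ratios of successive logarithms satisfy Λ_{n+1}/Λ_n → λ as n → ∞, where λ = (d + 2 + √(d(d+4)))/2 > 2; consequently, for every ε > 0 there exists N such that x_{n+1} > x_n^{λ−ε} for all n ≥ N. -/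
open Filter

private lemma poly_lb17 (F : Polynomial ℤ) (hFnonneg : ∀ i, 0 ≤ F.coeff i)
    (hF0 : F.coeff 0 = 1) (hFdeg : 1 ≤ F.natDegree) {q : ℚ} (hq : 1 ≤ q) :
    1 + q ^ F.natDegree ≤ Polynomial.aeval q F := by
  have hq0 : (0:ℚ) ≤ q := le_trans zero_le_one hq
  have hFne : F ≠ 0 := fun h => by simp [h] at hF0
  have hlead : 1 ≤ F.coeff F.natDegree := by
    have h1 : F.coeff F.natDegree ≠ 0 := by
      have := Polynomial.leadingCoeff_ne_zero.mpr hFne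
      rwa [Polynomial.leadingCoeff] at this
    have := hFnonneg F.natDegree
    omega
  rw [Polynomial.aeval_eq_sum_range]
  have hsub : ({0, F.natDegree} : Finset ℕ) ⊆ Finset.range (F.natDegree + 1) := by
    intro i hi
    simp only [Finset.mem_insert, Finset.mem_singleton] at hi
    rcases hi with h | h <;> simp [h, Finset.mem_range] <;> omega
  calc 1 + q ^ F.natDegree
      ≤ ∑ i ∈ ({0, F.natDegree} : Finset ℕ), F.coeff i • q ^ i := by
        rw [Finset.sum_pair (by omega : 0 ≠ F.natDegree)]
        simp only [zsmul_eq_mul, hF0, pow_zero]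
        have h1 : (1:ℚ) ≤ (F.coeff F.natDegree : ℚ) := by exact_mod_cast hlead
        have h2 : 1 * q ^ F.natDegree ≤ (F.coeff F.natDegree : ℚ) * q ^ F.natDegree :=
          mul_le_mul_of_nonneg_right h1 (pow_nonneg hq0 F.natDegree)
        push_cast
        linarith
    _ ≤ ∑ i ∈ Finset.range (F.natDegree + 1), F.coeff i • q ^ i := by
        refine Finset.sum_le_sum_of_subset_of_nonneg hsub fun i _ _ => ?_
        rw [zsmul_eq_mul]
        exact mul_nonneg (by exact_mod_cast hFnonneg i) (pow_nonneg hq0 i)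

private lemma poly_ub17 (F : Polynomial ℤ) (hFnonneg : ∀ i, 0 ≤ F.coeff i)
    {q : ℚ} (hq : 1 ≤ q) :
    Polynomial.aeval q F ≤ (Polynomial.aeval (1:ℚ) F) * q ^ F.natDegree := by
  have hq0 : (0:ℚ) ≤ q := le_trans zero_le_one hq
  rw [Polynomial.aeval_eq_sum_range, Polynomial.aeval_eq_sum_range, Finset.sum_mul]
  refine Finset.sum_le_sum fun i hi => ?_
  rw [zsmul_eq_mul, zsmul_eq_mul, one_pow, mul_one]
  have hile : i ≤ F.natDegree := Nat.lt_succ_iff.mp (Finset.mem_range.mp hi)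
  have : q ^ i ≤ q ^ F.natDegree := pow_le_pow_right₀ hq hile
  exact mul_le_mul_of_nonneg_left this (by exact_mod_cast hFnonneg i)

private lemma tendsto_zero_of_quarter17 (a e : ℕ → ℝ) (M : ℝ)
    (ha0 : ∀ n, 0 ≤ a n) (haM : ∀ n, a n ≤ M)
    (he0 : ∀ n, 0 ≤ e n) (he : Tendsto e atTop (nhds 0))
    (hrec : ∀ n, a (n + 1) ≤ a n / 4 + e n) :
    Tendsto a atTop (nhds 0) := by
  rw [Metric.tendsto_atTop]
  intro ε hε
  set M' := max M 1 with hM'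
  have hM'pos : (0:ℝ) < M' := lt_of_lt_of_le one_pos (le_max_right _ _)
  have haM' : ∀ n, a n ≤ M' := fun n => le_trans (haM n) (le_max_left _ _)
  obtain ⟨N, hN⟩ := (Metric.tendsto_atTop.mp he) (ε / 8) (by linarith)
  have hNe : ∀ n, N ≤ n → e n ≤ ε / 8 := by
    intro n hn
    have := hN n hn
    rw [Real.dist_eq, sub_zero, abs_of_nonneg (he0 n)] at this
    linarith
  have key : ∀ k, ∀ n, N + k ≤ n → a n ≤ M' / 4 ^ k + ε / 6 := by
    intro k
    induction k with
    | zero =>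
      intro n hn
      have := haM' n
      simp only [pow_zero, div_one]
      linarith
    | succ k ih =>
      intro n hn
      obtain ⟨m, rfl⟩ : ∃ m, n = m + 1 := ⟨n - 1, by omega⟩
      have h1 := hrec m
      have h2 := ih m (by omega)
      have h3 := hNe m (by omega)
      have h4 : (0:ℝ) < 4 ^ k := by positivity
      have h5 : M' / 4 ^ (k + 1) = (M' / 4 ^ k) / 4 := by
        rw [pow_succ]; ring
      rw [h5]
      linarith
  obtain ⟨k, hk⟩ : ∃ k : ℕ, M' / 4 ^ k < ε / 3 := by
    obtain ⟨k, hk⟩ := pow_unbounded_of_one_lt (M' / (ε / 3)) (by norm_num : (1:ℝ) < 4)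
    refine ⟨k, ?_⟩
    rw [div_lt_iff₀ (by positivity)]
    rw [div_lt_iff₀ (by linarith)] at hk
    nlinarith
  refine ⟨N + k, fun n hn => ?_⟩
  rw [Real.dist_eq, sub_zero, abs_of_nonneg (ha0 n)]
  have := key k n hn
  linarith

set_option maxHeartbeats 1000000 in
/-- the ratios of successive logarithms satisfy `Λ (n+1) / Λ n → λ` as
`n → ∞`, where `λ = (d + 2 + √(d(d+4))) / 2 > 2`; consequently, for every `ε > 0` there
exists `N` such that `x (n+1) > x n ^ (λ - ε)` for all `n ≥ N`. -/
theorem stmt_17 (F : Polynomial ℤ)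
    (hFnonneg : ∀ i, 0 ≤ F.coeff i) (hF0 : F.coeff 0 = 1) (hFdeg : 1 ≤ F.natDegree)
    (x : ℕ → ℚ) (hxpos : ∀ n, 0 < x n) (hx0 : x 0 = 1) (hx1 : x 1 = 1)
    (hrec : ∀ n, x (n + 2) * x n = (x (n + 1)) ^ 2 * Polynomial.aeval (x (n + 1)) F)
    (lam : ℝ)
    (hlam : lam = ((F.natDegree : ℝ) + 2 + Real.sqrt ((F.natDegree : ℝ) *
      ((F.natDegree : ℝ) + 4))) / 2) :
    Tendsto (fun n : ℕ => Real.log (x (n + 1) : ℝ) / Real.log (x n : ℝ)) atTop (nhds lam) ∧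
    2 < lam ∧
    ∀ ε : ℝ, 0 < ε → ∃ N : ℕ, ∀ n : ℕ, N ≤ n →
      (x n : ℝ) ^ (lam - ε) < (x (n + 1) : ℝ) := by
  set d := F.natDegree with hdd
  have hd1 : (1:ℝ) ≤ (d:ℝ) := by exact_mod_cast hFdeg
  -- lam facts
  have hs2 : (Real.sqrt ((d:ℝ) * ((d:ℝ) + 4))) ^ 2 = (d:ℝ) * ((d:ℝ) + 4) :=
    Real.sq_sqrt (by nlinarith)
  have hsgt : (d:ℝ) < Real.sqrt ((d:ℝ) * ((d:ℝ) + 4)) := by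
    nlinarith [Real.sqrt_nonneg ((d:ℝ) * ((d:ℝ) + 4))]
  have hlamgt : 2 < lam := by rw [hlam]; nlinarith
  have hlamfix : lam * lam - ((d:ℝ) + 2) * lam + 1 = 0 := by
    rw [hlam]; linear_combination hs2 / 4
  have hlamne : lam ≠ 0 := by positivity
  -- x monotone and ≥ 1
  have hxm : ∀ n, 1 ≤ x n ∧ x n ≤ x (n + 1) := by
    intro n
    induction n with
    | zero => rw [hx0, hx1]; exact ⟨le_refl 1, le_refl 1⟩
    | succ n ih =>
      have h1 : (1:ℚ) ≤ x (n + 1) := le_trans ih.1 ih.2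
      refine ⟨h1, ?_⟩
      have hF1 : (1:ℚ) ≤ Polynomial.aeval (x (n + 1)) F := by
        have h := poly_lb17 F hFnonneg hF0 hFdeg h1
        nlinarith [pow_nonneg (le_trans zero_le_one h1) d]
      have h := hrec n
      have hp0 := hxpos n
      nlinarith [ih.2, hxpos (n + 2)]
  have hx1R : ∀ n, (1:ℝ) ≤ (x n : ℝ) := fun n => by exact_mod_cast (hxm n).1
  have hxRpos : ∀ n, (0:ℝ) < (x n : ℝ) := fun n => lt_of_lt_of_le one_pos (hx1R n)
  set L : ℕ → ℝ := fun n => Real.log ((x n : ℝ)) with hLdef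
  have hL0 : ∀ n, 0 ≤ L n := fun n => Real.log_nonneg (hx1R n)
  have hLmono : ∀ n, L n ≤ L (n + 1) := fun n =>
    Real.log_le_log (hxRpos n) (by exact_mod_cast (hxm n).2)
  have hL00 : L 0 = 0 := by simp [hLdef, hx0]
  have hL10 : L 1 = 0 := by simp [hLdef, hx1]
  -- the constant S and C
  set S : ℚ := Polynomial.aeval (1:ℚ) F with hSdef
  have hS2 : 2 ≤ S := by
    have := poly_lb17 F hFnonneg hF0 hFdeg (le_refl (1:ℚ))
    rw [one_pow] at this; linarith
  set C : ℝ := Real.log ((S : ℝ)) with hCdef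
  have hC0 : 0 < C := Real.log_pos (by exact_mod_cast lt_of_lt_of_le one_lt_two hS2)
  -- key log-recurrence bounds
  have hdelta : ∀ n, (d:ℝ) * L (n + 1) ≤ L (n + 2) + L n - 2 * L (n + 1) ∧
      L (n + 2) + L n - 2 * L (n + 1) ≤ (d:ℝ) * L (n + 1) + C := by
    intro n
    have hq : (1:ℚ) ≤ x (n + 1) := (hxm (n + 1)).1
    have hq0 : (0:ℚ) ≤ x (n + 1) := le_trans zero_le_one hq
    have hFl := poly_lb17 F hFnonneg hF0 hFdeg hq
    have hFu := poly_ub17 F hFnonneg hq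
    set Fv : ℚ := Polynomial.aeval (x (n + 1)) F with hFvdef
    have hpd : (0:ℚ) < (x (n + 1)) ^ d := pow_pos (hxpos _) d
    have hFvpos : (0:ℚ) < Fv := by nlinarith
    have hrecR : ((x (n + 2) : ℝ)) * (x n : ℝ) = (x (n + 1) : ℝ) ^ 2 * ((Fv : ℚ) : ℝ) := by
      exact_mod_cast congrArg (fun q : ℚ => (q : ℝ)) (hrec n)
    have hlog : L (n + 2) + L n = 2 * L (n + 1) + Real.log ((Fv : ℝ)) := by
      have h1 : Real.log ((x (n + 2) : ℝ) * (x n : ℝ)) = L (n + 2) + L n :=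
        Real.log_mul (ne_of_gt (hxRpos _)) (ne_of_gt (hxRpos _))
      have h2 : Real.log ((x (n + 1) : ℝ) ^ 2 * ((Fv : ℚ) : ℝ))
          = 2 * L (n + 1) + Real.log ((Fv : ℝ)) := by
        rw [Real.log_mul (by positivity) (by exact_mod_cast ne_of_gt hFvpos),
          Real.log_pow]
        push_cast; ring
      rw [← h1, hrecR, h2]
    have hlow : (d:ℝ) * L (n + 1) ≤ Real.log ((Fv : ℝ)) := by
      have hle : ((x (n + 1) : ℝ)) ^ d ≤ ((Fv : ℝ)) := by
        have : (x (n + 1)) ^ d ≤ Fv := by nlinarith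
        exact_mod_cast this
      have := Real.log_le_log (by positivity) hle
      rwa [Real.log_pow] at this
    have hupp : Real.log ((Fv : ℝ)) ≤ (d:ℝ) * L (n + 1) + C := by
      have hle : ((Fv : ℝ)) ≤ ((S : ℝ)) * ((x (n + 1) : ℝ)) ^ d := by
        exact_mod_cast hFu
      have h2 := Real.log_le_log (by exact_mod_cast hFvpos) hle
      rw [Real.log_mul (by positivity) (by positivity), Real.log_pow] at h2
      linarith
    constructor <;> linarith
  -- growth estimates
  have hgrow : ∀ n, 2 * L (n + 1) ≤ L (n + 2) := by
    intro n
    have h := (hdelta n).1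
    have h2 := hLmono n
    have h3 := hL0 (n + 1)
    nlinarith
  have hx2 : x 2 = S := by
    have h := hrec 0
    rw [hx0, hx1] at h
    simpa using h
  have hL2pos : 0 < L 2 := by
    rw [hLdef]
    exact Real.log_pos (by rw [hx2]; exact_mod_cast lt_of_lt_of_le one_lt_two hS2)
  have hgeo : ∀ n, 2 ^ n * L 2 ≤ L (n + 2) := by
    intro n
    induction n with
    | zero => simp
    | succ n ih =>
      have h := hgrow (n + 1)
      calc 2 ^ (n + 1) * L 2 = 2 * (2 ^ n * L 2) := by ring
        _ ≤ 2 * L (n + 2) := by linarith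
        _ ≤ L (n + 3) := h
  have hLpos : ∀ n, 0 < L (n + 2) := fun n =>
    lt_of_lt_of_le (by positivity) (hgeo n)
  -- the error sequence
  set e : ℕ → ℝ := fun n => (L (n + 2) + L n - (2 + (d:ℝ)) * L (n + 1)) / L (n + 1)
    with hedef
  have he0 : ∀ n, 0 ≤ e n := by
    intro n
    cases n with
    | zero => simp [hedef, hL10]
    | succ n =>
      refine div_nonneg ?_ (le_of_lt (hLpos n))
      have := (hdelta (n + 1)).1
      linarith
  have heub : ∀ n, e (n + 1) ≤ C / (2 ^ n * L 2) := by
    intro n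
    have h1 := (hdelta (n + 1)).2
    simp only [show n+1+2 = n+3 from rfl, show n+1+1 = n+2 from rfl] at h1
    have h3 := hgeo n
    have h4 : (0:ℝ) < 2 ^ n * L 2 := by positivity
    have h5 : e (n + 1) = (L (n + 3) + L (n + 1) - (2 + (d:ℝ)) * L (n + 2)) / L (n + 2) := rfl
    rw [h5]
    exact div_le_div₀ hC0.le (by linarith) h4 h3
  have he : Tendsto e atTop (nhds 0) := by
    rw [← tendsto_add_atTop_iff_nat 1]
    have hg : Tendsto (fun n : ℕ => (C / L 2) * (1 / 2 : ℝ) ^ n) atTop (nhds 0) := by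
      have h := tendsto_pow_atTop_nhds_zero_of_lt_one (by norm_num : (0:ℝ) ≤ 1/2)
        (by norm_num : (1/2:ℝ) < 1)
      simpa using h.const_mul (C / L 2)
    refine squeeze_zero (fun n => he0 (n + 1)) (fun n => ?_) hg
    have h2 : C / L 2 * (1 / 2 : ℝ) ^ n = C / (2 ^ n * L 2) := by
      rw [div_pow, one_pow]
      ring
    rw [h2]
    exact heub n
  -- the ratio sequence
  set r : ℕ → ℝ := fun n => L (n + 1) / L n with hrdef
  have hL2le : ∀ n, L 2 ≤ L (n + 2) := by
    intro n
    have h := hgeo n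
    have h2 : (1:ℝ) ≤ 2 ^ n := one_le_pow₀ (by norm_num)
    nlinarith
  have hr2 : ∀ n, 2 ≤ r (n + 2) := by
    intro n
    have : r (n + 2) = L (n + 3) / L (n + 2) := rfl
    rw [this, le_div_iff₀ (hLpos n)]
    exact hgrow (n + 1)
  have hrub : ∀ n, r (n + 2) ≤ ((d:ℝ) + 2) + C / L 2 := by
    intro n
    have h1 := (hdelta (n + 1)).2
    simp only [show n+1+2 = n+3 from rfl, show n+1+1 = n+2 from rfl] at h1
    have h0 := hL0 (n + 1)
    have h2 : L (n + 3) ≤ ((d:ℝ) + 2) * L (n + 2) + C := by linarith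
    have h4 : C ≤ C / L 2 * L (n + 2) := by
      rw [div_mul_eq_mul_div, le_div_iff₀ hL2pos]
      nlinarith [hL2le n]
    have h5 : r (n + 2) = L (n + 3) / L (n + 2) := rfl
    rw [h5, div_le_iff₀ (hLpos n)]
    have h6 : ((d:ℝ) + 2 + C / L 2) * L (n + 2)
        = ((d:ℝ) + 2) * L (n + 2) + (C / L 2) * L (n + 2) := by ring
    linarith
  have hrrec : ∀ n, r (n + 3) = ((d:ℝ) + 2) - 1 / r (n + 2) + e (n + 2) := by
    intro n
    have hA : L (n + 3) ≠ 0 := (hLpos (n + 1)).ne'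
    have hB : L (n + 2) ≠ 0 := (hLpos n).ne'
    have h1 : r (n + 3) = L (n + 4) / L (n + 3) := rfl
    have h2 : r (n + 2) = L (n + 3) / L (n + 2) := rfl
    have h3 : e (n + 2) = (L (n + 4) + L (n + 2) - (2 + (d:ℝ)) * L (n + 3)) / L (n + 3) := rfl
    rw [h1, h2, h3]
    field_simp
    ring
  -- contraction for a
  have h1lam : 1 / lam = ((d:ℝ) + 2) - lam := by
    rw [div_eq_iff hlamne]
    linear_combination hlamfix
  set a : ℕ → ℝ := fun n => |r n - lam| with hadef
  have key : ∀ n, a (n + 3) ≤ a (n + 2) / 4 + e (n + 2) := by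
    intro n
    have hr := hr2 n
    have hrpos : (0:ℝ) < r (n + 2) := by linarith
    have hprod : (4:ℝ) ≤ lam * r (n + 2) := by nlinarith
    have hfrac : (r (n + 2) - lam) / (lam * r (n + 2)) = 1 / lam - 1 / r (n + 2) := by
      field_simp
    have heq : r (n + 3) - lam = (r (n + 2) - lam) / (lam * r (n + 2)) + e (n + 2) := by
      rw [hrrec n, hfrac, h1lam]
      ring
    have ha3 : a (n + 3) = |r (n + 3) - lam| := rfl
    have ha2 : a (n + 2) = |r (n + 2) - lam| := rfl
    rw [ha3, ha2, heq]
    calc |(r (n + 2) - lam) / (lam * r (n + 2)) + e (n + 2)|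
        ≤ |(r (n + 2) - lam) / (lam * r (n + 2))| + |e (n + 2)| := abs_add_le _ _
      _ = |r (n + 2) - lam| / (lam * r (n + 2)) + e (n + 2) := by
          rw [abs_div, abs_of_pos (by nlinarith : (0:ℝ) < lam * r (n + 2)),
            abs_of_nonneg (he0 (n + 2))]
      _ ≤ |r (n + 2) - lam| / 4 + e (n + 2) := by
          have := div_le_div_of_nonneg_left (abs_nonneg (r (n + 2) - lam))
            (by norm_num : (0:ℝ) < 4) hprod
          linarith
  have hCL : 0 ≤ C / L 2 := div_nonneg hC0.le hL2pos.le
  have haM : ∀ k, a (k + 2) ≤ lam + (((d:ℝ) + 2) + C / L 2) := by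
    intro k
    have h1 := hr2 k
    have h2 := hrub k
    have ha2 : a (k + 2) = |r (k + 2) - lam| := rfl
    rw [ha2]
    rw [abs_le]
    refine ⟨by linarith, by linarith⟩
  have hA : Tendsto (fun k => a (k + 2)) atTop (nhds 0) := by
    refine tendsto_zero_of_quarter17 (fun k => a (k + 2)) (fun k => e (k + 2))
      (lam + (((d:ℝ) + 2) + C / L 2)) (fun k => abs_nonneg _) haM (fun k => he0 _)
      ((tendsto_add_atTop_iff_nat 2).mpr he) (fun k => key k)
  have ha : Tendsto a atTop (nhds 0) := (tendsto_add_atTop_iff_nat 2).mp hA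
  have hrlim : Tendsto r atTop (nhds lam) := by
    have h1 : Tendsto (fun n => r n - lam) atTop (nhds 0) := by
      rw [tendsto_zero_iff_norm_tendsto_zero]
      simpa [Real.norm_eq_abs] using ha
    have h2 := h1.add_const lam
    simpa using h2
  refine ⟨hrlim, hlamgt, ?_⟩
  intro ε hε
  obtain ⟨N, hN⟩ := Metric.tendsto_atTop.mp hrlim ε hε
  refine ⟨N + 2, fun n hn => ?_⟩
  obtain ⟨m, rfl⟩ : ∃ m, n = m + 2 := ⟨n - 2, by omega⟩
  have h := hN (m + 2) (by omega)
  rw [Real.dist_eq] at h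
  have h2 : lam - ε < r (m + 2) := by
    have h3 := (abs_lt.mp h).1
    linarith
  have h2' : r (m + 2) = L (m + 3) / L (m + 2) := rfl
  rw [h2', lt_div_iff₀ (hLpos m)] at h2
  have h4 : ((x (m + 2) : ℝ)) ^ (lam - ε) = Real.exp ((lam - ε) * L (m + 2)) := by
    rw [Real.rpow_def_of_pos (hxRpos _), mul_comm]
  have h5 : ((x (m + 3) : ℝ)) = Real.exp (L (m + 3)) := (Real.exp_log (hxRpos _)).symm
  calc ((x (m + 2) : ℝ)) ^ (lam - ε) = Real.exp ((lam - ε) * L (m + 2)) := h4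
    _ < Real.exp (L (m + 3)) := Real.exp_lt_exp.mpr h2
    _ = ((x (m + 3) : ℝ)) := h5.symm
end
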